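/- arXiv:2604.23201 — 12 statements merged into one kernel-verified Lean document; each statement's English description precedes it below -/
import Mathlib

section
/- Let X be a Hausdorff topological space and G a subgroup of the group of homeomorphisms of X. Let τ_p be the topology on G generated by the subbasic sets [x, O] = {g ∈ G : g(x) ∈ O} for x ∈ X and O ⊆ X open (the topology of pointwise convergence), and let τ_g be the topology on G generated by the subbasic sets [K, O] = {g ∈ G : g(K) ⊆ O} where K ⊆ X is closed, O ⊆ X is open, and either K is compact or X ∖ O is compact (the g-topology). If (G, τ_p) is a topological group and the evaluation action (G, τ_p) × X → X, (g, x) ↦ g(x), is continuous, then τ_p = τ_g. -/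
/-!
For compact `K`, the set `[K, O]` is open in any topology making the action continuous: currying
the action gives a continuous map into `C(X, X)` with the compact-open topology, where
`{f | MapsTo f K O}` is open. When `X ∖ O` is compact, `g(K) ⊆ O` iff `g⁻¹(X ∖ O) ⊆ X ∖ K`, so
`[K, O]` is the preimage under inversion of a set of the first kind. Conversely `[x, O] = [{x}, O]`.
-/

open Set

section
variable {G X : Type*} [Group G] [MulAction G X]

theorem mapsTo_smul_iff_mapsTo_inv_smul_compl (g : G) {K O : Set X} :
    MapsTo (g • ·) K O ↔ MapsTo (g⁻¹ • ·) Oᶜ Kᶜ := by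
  refine ⟨fun h y hy hyK => hy ?_, fun h x hx => not_not.mp fun hxO => ?_⟩
  · simpa using h hyK
  · exact h hxO (by simpa using hx)

variable [TopologicalSpace G] [TopologicalSpace X]

theorem isOpen_setOf_mapsTo_smul [ContinuousSMul G X] {K O : Set X} (hK : IsCompact K)
    (hO : IsOpen O) : IsOpen {g : G | MapsTo (g • ·) K O} :=
  (ContinuousMap.isOpen_setOfPred_mapsTo hK hO).preimage
    (ContinuousMap.curry ⟨_, continuous_smul⟩).continuous

theorem isOpen_setOf_mapsTo_smul_of_isCompact_compl [ContinuousInv G] [ContinuousSMul G X]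
    {K O : Set X} (hK : IsClosed K) (hO : IsCompact Oᶜ) : IsOpen {g : G | MapsTo (g • ·) K O} := by
  convert (isOpen_setOf_mapsTo_smul hO hK.isOpen_compl).preimage (continuous_inv (G := G)) using 1
  ext g
  exact mapsTo_smul_iff_mapsTo_inv_smul_compl g
end

theorem stmt_0_general {X : Type*} [TopologicalSpace X] [T2Space X]
    (G : Subgroup (Equiv.Perm X))
    (τp τg : TopologicalSpace G)
    (hτp : τp = TopologicalSpace.generateFrom
      {s : Set G | ∃ (x : X) (O : Set X), IsOpen O ∧
        s = {g : G | (g : Equiv.Perm X) x ∈ O}})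
    (hτg : τg = TopologicalSpace.generateFrom
      {s : Set G | ∃ (K O : Set X), IsClosed K ∧ IsOpen O ∧ (IsCompact K ∨ IsCompact Oᶜ) ∧
        s = {g : G | ∀ x ∈ K, (g : Equiv.Perm X) x ∈ O}})
    (hgroup : @IsTopologicalGroup G τp inferInstance)
    (hact : @Continuous (G × X) X (@instTopologicalSpaceProd G X τp inferInstance)
      inferInstance (fun p => (p.1 : Equiv.Perm X) p.2)) :
    τp = τg := by
  let _ := τp
  have : ContinuousSMul G X := ⟨hact⟩
  apply le_antisymm
  · rw [hτg]
    refine le_generateFrom ?_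
    rintro _ ⟨K, O, hK, hO, hK' | hO', rfl⟩
    · exact isOpen_setOf_mapsTo_smul hK' hO
    · exact isOpen_setOf_mapsTo_smul_of_isCompact_compl hK hO'
  · rw [hτp, hτg]
    refine le_generateFrom ?_
    rintro _ ⟨x, O, hO, rfl⟩
    refine TopologicalSpace.isOpen_generateFrom_of_mem
      ⟨{x}, O, isClosed_singleton, hO, .inl isCompact_singleton, ?_⟩
    simp

/-- Let `X` be Hausdorff and `G` a subgroup of the group of homeomorphisms of `X`
(modelled as a subgroup of the permutation group all of whose elements are continuous,
hence homeomorphisms since `G` is closed under inverses).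
If the topology of pointwise convergence `τp` on `G` makes `G` a topological group and the
evaluation action continuous, then `τp` coincides with the `g`-topology `τg`. -/
theorem stmt_0 {X : Type*} [TopologicalSpace X] [T2Space X]
    (G : Subgroup (Equiv.Perm X))
    (hhomeo : ∀ g : G, Continuous ⇑(g : Equiv.Perm X))
    (τp τg : TopologicalSpace G)
    (hτp : τp = TopologicalSpace.generateFrom
      {s : Set G | ∃ (x : X) (O : Set X), IsOpen O ∧
        s = {g : G | (g : Equiv.Perm X) x ∈ O}})
    (hτg : τg = TopologicalSpace.generateFrom
      {s : Set G | ∃ (K O : Set X), IsClosed K ∧ IsOpen O ∧ (IsCompact K ∨ IsCompact Oᶜ) ∧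
        s = {g : G | ∀ x ∈ K, (g : Equiv.Perm X) x ∈ O}})
    (hgroup : @IsTopologicalGroup G τp inferInstance)
    (hact : @Continuous (G × X) X (@instTopologicalSpaceProd G X τp inferInstance)
      inferInstance (fun p => (p.1 : Equiv.Perm X) p.2)) :
    τp = τg :=
  stmt_0_general G τp τg hτp hτg hgroup hact
end

section
/- Let Y and X be locally compact Hausdorff spaces and f : Y → X a perfect continuous surjection. Then the induced map F : 2^Y → 2^X, F(A) = f(A) (the image of A under f), between the hyperspaces of closed subsets equipped with the Fell topologies, is a perfect continuous surjection. -/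
/-!
The Fell hyperspace of any space is compact: an ultrafilter converges to the closed set of points
all of whose neighbourhoods it hits. For locally compact spaces it is moreover Hausdorff, since a
point of `A \ B` has a compact neighbourhood `K` missing `B`, and "hits `interior K`" and
"misses `K`" are disjoint open conditions. As `f` is proper, `F` pulls the subbasic sets "hits `W`"
and "misses `K`" back to "hits `f⁻¹' W`" and "misses `f⁻¹' K`", so `F` is continuous,
hence perfect as a map from a compact space to a Hausdorff one. It is onto since `F (f⁻¹' B) = B`.
-/

open Set Filter Topology TopologicalSpace

/-- The hyperspace of closed subsets of a topological space (including `∅`). -/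
abbrev HClosed (Z : Type*) [TopologicalSpace Z] := {A : Set Z // IsClosed A}

/-- The Fell topology on the hyperspace of closed subsets: generated by the sets
`{A | A ∩ W ≠ ∅}` for `W` open and `{A | A ∩ K = ∅}` for `K` compact. -/
def fellTop (Z : Type*) [TopologicalSpace Z] : TopologicalSpace (HClosed Z) :=
  TopologicalSpace.generateFrom
    ({s | ∃ W : Set Z, IsOpen W ∧ s = {A : HClosed Z | ((A : Set Z) ∩ W).Nonempty}} ∪
     {s | ∃ K : Set Z, IsCompact K ∧ s = {A : HClosed Z | (A : Set Z) ∩ K = ∅}})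

namespace HClosed

variable {Z : Type*} [TopologicalSpace Z]

def hitting (W : Set Z) : Set (HClosed Z) := {A | ((A : Set Z) ∩ W).Nonempty}

def missing (K : Set Z) : Set (HClosed Z) := {A | (A : Set Z) ∩ K = ∅}

theorem missing_eq_compl_hitting (K : Set Z) : missing K = (hitting K)ᶜ := by
  ext A
  simp [missing, hitting, nonempty_iff_ne_empty]

theorem missing_anti {K K' : Set Z} (h : K ⊆ K') : missing K' ⊆ missing K := by
  rw [missing_eq_compl_hitting, missing_eq_compl_hitting, compl_subset_compl]
  exact fun _ ⟨y, hyA, hyK⟩ => ⟨y, hyA, h hyK⟩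

theorem missing_iUnion {ι : Sort*} (K : ι → Set Z) :
    missing (⋃ i, K i) = ⋂ i, missing (K i) := by
  ext A
  simp [missing, inter_iUnion]

theorem disjoint_hitting_missing {W K : Set Z} (h : W ⊆ K) :
    Disjoint (hitting W) (missing K) := by
  rw [missing_eq_compl_hitting, disjoint_compl_right_iff_subset]
  exact fun _ ⟨y, hyA, hyW⟩ => ⟨y, hyA, h hyW⟩

theorem isOpen_hitting {W : Set Z} (hW : IsOpen W) : IsOpen[fellTop Z] (hitting W) :=
  isOpen_generateFrom_of_mem (Or.inl ⟨W, hW, rfl⟩)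

theorem isOpen_missing {K : Set Z} (hK : IsCompact K) : IsOpen[fellTop Z] (missing K) :=
  isOpen_generateFrom_of_mem (Or.inr ⟨K, hK, rfl⟩)

theorem le_nhds_fellTop {U : Filter (HClosed Z)} {A : HClosed Z}
    (hit : ∀ W, IsOpen W → A ∈ hitting W → hitting W ∈ U)
    (miss : ∀ K, IsCompact K → A ∈ missing K → missing K ∈ U) :
    U ≤ @nhds _ (fellTop Z) A := by
  rw [fellTop, nhds_generateFrom]
  refine le_iInf₂ fun s ⟨hAs, hs⟩ => le_principal_iff.2 ?_
  rcases hs with ⟨W, hW, rfl⟩ | ⟨K, hK, rfl⟩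
  exacts [hit W hW hAs, miss K hK hAs]

theorem compactSpace_fellTop : @CompactSpace (HClosed Z) (fellTop Z) := by
  let _ := fellTop Z
  refine ⟨isCompact_iff_ultrafilter_le_nhds.2 fun U _ => ?_⟩
  set L : Set Z := {y | ∀ W, IsOpen W → y ∈ W → hitting W ∈ U}
  have hL : IsClosed L := by
    rw [← isOpen_compl_iff, isOpen_iff_forall_mem_open]
    intro y hy
    simp only [L, mem_compl_iff, mem_ofPred_eq, not_forall] at hy
    obtain ⟨W, hW, hyW, hWU⟩ := hy
    exact ⟨W, fun z hz hzL => hWU (hzL W hW hz), hW, hyW⟩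
  refine ⟨⟨L, hL⟩, mem_univ _, le_nhds_fellTop ?_ ?_⟩
  · rintro W hW ⟨y, hyL, hyW⟩
    exact hyL W hW hyW
  · intro K hK hLK
    have hcover : ∀ y ∈ K, ∃ W, IsOpen W ∧ y ∈ W ∧ missing W ∈ U := by
      intro y hyK
      have hyL : y ∉ L := fun hyL => (hLK.subset ⟨hyL, hyK⟩ : y ∈ (∅ : Set Z))
      simp only [L, mem_ofPred_eq, not_forall] at hyL
      obtain ⟨W, hW, hyW, hWU⟩ := hyL
      exact ⟨W, hW, hyW, missing_eq_compl_hitting W ▸ Ultrafilter.compl_mem_iff_notMem.2 hWU⟩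
    choose! W hW hyW hWU using hcover
    obtain ⟨t, htK, hKt⟩ := hK.elim_nhds_subcover W fun y hy => (hW y hy).mem_nhds (hyW y hy)
    refine mem_of_superset ?_ (missing_anti hKt)
    simp only [missing_iUnion]
    exact (biInter_finset_mem t).2 fun y hy => hWU y (htK y hy)

theorem disjoint_nhds_fellTop [LocallyCompactSpace Z] {A B : HClosed Z} {y : Z}
    (hyA : y ∈ (A : Set Z)) (hyB : y ∉ (B : Set Z)) :
    Disjoint (@nhds _ (fellTop Z) A) (@nhds _ (fellTop Z) B) := by
  let _ := fellTop Z
  obtain ⟨K, hKy, hKB, hK⟩ := local_compact_nhds (B.2.isOpen_compl.mem_nhds hyB)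
  refine disjoint_of_disjoint_of_mem (disjoint_hitting_missing interior_subset)
    ((isOpen_hitting isOpen_interior).mem_nhds ⟨y, hyA, mem_interior_iff_mem_nhds.2 hKy⟩)
    ((isOpen_missing hK).mem_nhds ?_)
  exact disjoint_iff_inter_eq_empty.1 (subset_compl_iff_disjoint_left.1 hKB)

theorem t2Space_fellTop [LocallyCompactSpace Z] : @T2Space (HClosed Z) (fellTop Z) := by
  let _ := fellTop Z
  refine t2Space_iff_disjoint_nhds.2 fun A B hAB => ?_
  obtain ⟨y, hyA, hyB⟩ | ⟨y, hyB, hyA⟩ :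
      ((A : Set Z) \ B).Nonempty ∨ ((B : Set Z) \ A).Nonempty := by
    by_contra! h
    simp only [sdiff_eq_empty] at h
    exact hAB (Subtype.ext (h.1.antisymm h.2))
  exacts [disjoint_nhds_fellTop hyA hyB, (disjoint_nhds_fellTop hyB hyA).symm]

variable {Y : Type*} [TopologicalSpace Y] {f : Y → Z} {F : HClosed Y → HClosed Z}

theorem preimage_hitting (hF : ∀ A, (F A : Set Z) = f '' A) (W : Set Z) :
    F ⁻¹' hitting W = hitting (f ⁻¹' W) := by
  ext A
  simp [hitting, hF, image_inter_nonempty_iff]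

theorem preimage_missing (hF : ∀ A, (F A : Set Z) = f '' A) (K : Set Z) :
    F ⁻¹' missing K = missing (f ⁻¹' K) := by
  rw [missing_eq_compl_hitting, missing_eq_compl_hitting, preimage_compl, preimage_hitting hF]

theorem continuous_fellTop_of_isProperMap (hf : IsProperMap f)
    (hF : ∀ A, (F A : Set Z) = f '' A) : Continuous[fellTop Y, fellTop Z] F := by
  refine continuous_generateFrom_iff.2 ?_
  rintro s (⟨W, hW, rfl⟩ | ⟨K, hK, rfl⟩)
  · rw [← hitting, preimage_hitting hF]
    exact isOpen_hitting (hW.preimage hf.continuous)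
  · rw [← missing, preimage_missing hF]
    exact isOpen_missing (hf.isCompact_preimage hK)

end HClosed

theorem stmt_5_general {Y X : Type*} [TopologicalSpace Y]
    [TopologicalSpace X] [LocallyCompactSpace X]
    (f : Y → X) (hfc : Continuous f) (hfcl : IsClosedMap f)
    (hfib : ∀ x : X, IsCompact (f ⁻¹' {x})) (hfs : Function.Surjective f)
    (F : HClosed Y → HClosed X)
    (hF : ∀ A : HClosed Y, (F A : Set X) = f '' (A : Set Y)) :
    @Continuous _ _ (fellTop Y) (fellTop X) F ∧
    @IsClosedMap _ _ (fellTop Y) (fellTop X) F ∧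
    (∀ B : HClosed X, @IsCompact _ (fellTop Y) (F ⁻¹' {B})) ∧
    Function.Surjective F := by
  let _ := fellTop Y
  let _ := fellTop X
  have := HClosed.compactSpace_fellTop (Z := Y)
  have := HClosed.t2Space_fellTop (Z := X)
  have hcont : Continuous F := HClosed.continuous_fellTop_of_isProperMap
    (isProperMap_iff_isClosedMap_and_compact_fibers.2 ⟨hfc, hfcl, hfib⟩) hF
  refine ⟨hcont, hcont.isClosedMap, fun B => (isClosed_singleton.preimage hcont).isCompact,
    fun B => ⟨⟨f ⁻¹' B, B.2.preimage hfc⟩, Subtype.ext ?_⟩⟩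
  rw [hF, image_preimage_eq _ hfs]

/-- A perfect continuous surjection `f : Y → X` of locally compact Hausdorff spaces induces a
perfect continuous surjection `F : 2^Y → 2^X`, `F(A) = f(A)`, of the Fell hyperspaces. -/
theorem stmt_5 {Y X : Type*} [TopologicalSpace Y] [T2Space Y] [LocallyCompactSpace Y]
    [TopologicalSpace X] [T2Space X] [LocallyCompactSpace X]
    (f : Y → X) (hfc : Continuous f) (hfcl : IsClosedMap f)
    (hfib : ∀ x : X, IsCompact (f ⁻¹' {x})) (hfs : Function.Surjective f)
    (F : HClosed Y → HClosed X)
    (hF : ∀ A : HClosed Y, (F A : Set X) = f '' (A : Set Y)) :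
    @Continuous _ _ (fellTop Y) (fellTop X) F ∧
    @IsClosedMap _ _ (fellTop Y) (fellTop X) F ∧
    (∀ B : HClosed X, @IsCompact _ (fellTop Y) (F ⁻¹' {B})) ∧
    Function.Surjective F :=
  stmt_5_general f hfc hfcl hfib hfs F hF
end

section
/- Let Y be a locally compact Hausdorff space and X ⊆ Y an open subset. Then the map H : 2^Y → 2^X, H(A) = A ∩ X, between the hyperspaces of closed subsets equipped with the Fell topologies, is a perfect continuous surjection, and H⁻¹(∅) = {A ∈ 2^Y : A ⊆ Y ∖ X}. -/
open Set Filter Topology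

namespace fellTop

variable {Z : Type*} [TopologicalSpace Z]

lemma isOpen_inter_nonempty {W : Set Z} (hW : IsOpen W) :
    IsOpen[fellTop Z] {A : HClosed Z | ((A : Set Z) ∩ W).Nonempty} :=
  TopologicalSpace.isOpen_generateFrom_of_mem (Or.inl ⟨W, hW, rfl⟩)

lemma isOpen_inter_eq_empty {K : Set Z} (hK : IsCompact K) :
    IsOpen[fellTop Z] {A : HClosed Z | (A : Set Z) ∩ K = ∅} :=
  TopologicalSpace.isOpen_generateFrom_of_mem (Or.inr ⟨K, hK, rfl⟩)

def lowerLimit (U : Ultrafilter (HClosed Z)) : Set Z :=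
  {z | ∀ W : Set Z, IsOpen W → z ∈ W → {A : HClosed Z | ((A : Set Z) ∩ W).Nonempty} ∈ U}

lemma isClosed_lowerLimit (U : Ultrafilter (HClosed Z)) : IsClosed (lowerLimit U) := by
  refine isOpen_compl_iff.mp (isOpen_iff_forall_mem_open.mpr fun z hz => ?_)
  simp only [lowerLimit, mem_compl_iff, mem_ofPred_eq, not_forall] at hz
  obtain ⟨W, hW, hzW, hWU⟩ := hz
  exact ⟨W, fun y hyW hy => hWU (hy W hW hyW), hW, hzW⟩

lemma inter_eq_empty_mem_of_lowerLimit_inter_eq_empty {U : Ultrafilter (HClosed Z)} {K : Set Z}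
    (hK : IsCompact K) (h : lowerLimit U ∩ K = ∅) :
    {A : HClosed Z | (A : Set Z) ∩ K = ∅} ∈ U := by
  refine hK.induction_on (p := fun S => {A : HClosed Z | (A : Set Z) ∩ S = ∅} ∈ U) ?_ ?_ ?_ ?_
  · exact mem_of_superset univ_mem fun A _ => inter_empty _
  · intro S T hST hT
    exact mem_of_superset hT fun A hA => subset_empty_iff.mp (hA ▸ inter_subset_inter_right _ hST)
  · intro S T hS hT
    filter_upwards [hS, hT] with A hAS hAT
    rw [inter_union_distrib_left, hAS, hAT, union_empty]
  · intro z hzK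
    have hz : z ∉ lowerLimit U := fun hz => (eq_empty_iff_forall_notMem.mp h z) ⟨hz, hzK⟩
    simp only [lowerLimit, mem_ofPred_eq, not_forall] at hz
    obtain ⟨W, hW, hzW, hWU⟩ := hz
    refine ⟨W, mem_nhdsWithin_of_mem_nhds (hW.mem_nhds hzW), ?_⟩
    filter_upwards [Ultrafilter.compl_mem_iff_notMem.mpr hWU] with A hA
    exact not_nonempty_iff_eq_empty.mp hA

lemma compactSpace : @CompactSpace (HClosed Z) (fellTop Z) := by
  let := fellTop Z
  refine ⟨isCompact_iff_ultrafilter_le_nhds.mpr fun U _ =>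
    ⟨⟨lowerLimit U, isClosed_lowerLimit U⟩, mem_univ _, ?_⟩⟩
  refine tendsto_id'.mp (TopologicalSpace.tendsto_nhds_generateFrom_iff.mpr ?_)
  rintro s (⟨W, hW, rfl⟩ | ⟨K, hK, rfl⟩) hs
  · obtain ⟨z, hzL, hzW⟩ := hs
    exact hzL W hW hzW
  · exact inter_eq_empty_mem_of_lowerLimit_inter_eq_empty hK hs

lemma exists_separating_of_mem_of_notMem [LocallyCompactSpace Z] {A B : HClosed Z} {z : Z}
    (hzA : z ∈ (A : Set Z)) (hzB : z ∉ (B : Set Z)) :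
    ∃ u v : Set (HClosed Z), IsOpen[fellTop Z] u ∧ IsOpen[fellTop Z] v ∧ A ∈ u ∧ B ∈ v ∧
      Disjoint u v := by
  obtain ⟨K, hK, hzK, hKB⟩ := exists_compact_subset B.2.isOpen_compl hzB
  refine ⟨_, _, isOpen_inter_nonempty isOpen_interior, isOpen_inter_eq_empty hK,
    ⟨z, hzA, hzK⟩, ?_, ?_⟩
  · exact subset_empty_iff.mp fun y hy => hKB hy.2 hy.1
  · refine disjoint_left.mpr fun F ⟨y, hyF, hyK⟩ hF => ?_
    exact (eq_empty_iff_forall_notMem.mp hF) y ⟨hyF, interior_subset hyK⟩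

lemma t2Space [LocallyCompactSpace Z] : @T2Space (HClosed Z) (fellTop Z) := by
  let := fellTop Z
  refine ⟨fun A B hAB => ?_⟩
  by_cases hAB' : (A : Set Z) ⊆ B
  · obtain ⟨z, hzB, hzA⟩ := not_subset.mp fun hBA => hAB (Subtype.ext (hAB'.antisymm hBA))
    obtain ⟨u, v, hu, hv, hBu, hAv, huv⟩ := exists_separating_of_mem_of_notMem hzB hzA
    exact ⟨v, u, hv, hu, hAv, hBu, huv.symm⟩
  · obtain ⟨z, hzA, hzB⟩ := not_subset.mp hAB'
    exact exists_separating_of_mem_of_notMem hzA hzB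

variable {X : Type*} [TopologicalSpace X] {f : X → Z} {H : HClosed Z → HClosed X}

lemma continuous_of_coe_eq_preimage (hf : Continuous f) (hfo : IsOpenMap f)
    (hH : ∀ A, (H A : Set X) = f ⁻¹' A) : Continuous[fellTop Z, fellTop X] H := by
  refine continuous_generateFrom_iff.mpr ?_
  rintro s (⟨W, hW, rfl⟩ | ⟨K, hK, rfl⟩)
  · convert isOpen_inter_nonempty (hfo W hW) using 1
    ext A
    rw [mem_preimage, mem_ofPred_eq, mem_ofPred_eq, hH, inter_comm (A : Set Z),
      image_inter_nonempty_iff, inter_comm]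
  · convert isOpen_inter_eq_empty (hK.image hf) using 1
    ext A
    rw [mem_preimage, mem_ofPred_eq, mem_ofPred_eq, hH, ← not_nonempty_iff_eq_empty,
      ← not_nonempty_iff_eq_empty, inter_comm (A : Set Z), image_inter_nonempty_iff, inter_comm]

lemma surjective_of_coe_eq_preimage (hf : IsInducing f) (hH : ∀ A, (H A : Set X) = f ⁻¹' A) :
    Function.Surjective H := fun B =>
  ⟨⟨closure (f '' B), isClosed_closure⟩,
    Subtype.ext <| by rw [hH, ← hf.closure_eq_preimage_closure_image, B.2.closure_eq]⟩

end fellTop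

theorem stmt_6_general {Y : Type*} [TopologicalSpace Y] [LocallyCompactSpace Y]
    (X : Set Y) (hX : IsOpen X)
    (H : HClosed Y → HClosed X)
    (hH : ∀ A : HClosed Y, (H A : Set X) = Subtype.val ⁻¹' (A : Set Y)) :
    @Continuous _ _ (fellTop Y) (fellTop X) H ∧
    @IsClosedMap _ _ (fellTop Y) (fellTop X) H ∧
    (∀ B : HClosed X, @IsCompact _ (fellTop Y) (H ⁻¹' {B})) ∧
    Function.Surjective H ∧
    H ⁻¹' {(⟨∅, isClosed_empty⟩ : HClosed X)} = {A : HClosed Y | (A : Set Y) ⊆ Xᶜ} := by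
  let := fellTop Y
  let := fellTop X
  have := fellTop.compactSpace (Z := Y)
  have : LocallyCompactSpace X := hX.locallyCompactSpace
  have := fellTop.t2Space (Z := X)
  have hcont : Continuous H :=
    fellTop.continuous_of_coe_eq_preimage continuous_subtype_val hX.isOpenMap_subtype_val hH
  refine ⟨hcont, hcont.isClosedMap, fun B => (isClosed_singleton.preimage hcont).isCompact,
    fellTop.surjective_of_coe_eq_preimage IsInducing.subtypeVal hH, ?_⟩
  ext A
  rw [mem_preimage, mem_singleton_iff, Subtype.ext_iff, hH, Subtype.preimage_coe_eq_empty,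
    mem_ofPred_eq, subset_compl_iff_disjoint_left, disjoint_iff_inter_eq_empty]

/-- For a locally compact Hausdorff space `Y` and an open subset `X ⊆ Y`, the map
`H : 2^Y → 2^X`, `H(A) = A ∩ X`, of Fell hyperspaces is a perfect continuous surjection
and `H⁻¹(∅) = {A | A ⊆ Y \ X}`. -/
theorem stmt_6 {Y : Type*} [TopologicalSpace Y] [T2Space Y] [LocallyCompactSpace Y]
    (X : Set Y) (hX : IsOpen X)
    (H : HClosed Y → HClosed X)
    (hH : ∀ A : HClosed Y, (H A : Set X) = Subtype.val ⁻¹' (A : Set Y)) :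
    @Continuous _ _ (fellTop Y) (fellTop X) H ∧
    @IsClosedMap _ _ (fellTop Y) (fellTop X) H ∧
    (∀ B : HClosed X, @IsCompact _ (fellTop Y) (H ⁻¹' {B})) ∧
    Function.Surjective H ∧
    H ⁻¹' {(⟨∅, isClosed_empty⟩ : HClosed X)} = {A : HClosed Y | (A : Set Y) ⊆ Xᶜ} :=
  stmt_6_general X hX H hH
end

section
/- Let X be a compact Hausdorff space and G a subgroup of the homeomorphism group of X, equipped with the compact-open topology. Then the graph map ι : G → 2^{X×X}, ι(g) = Γ(g) = {(x, g(x)) : x ∈ X}, is a topological embedding of G into the hyperspace of closed subsets of X × X with the Vietoris topology. -/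
open Topology

/-- The Vietoris topology on the hyperspace of closed subsets: generated by the sets
`{A | A ∩ W ≠ ∅}` and `{A | A ⊆ W}` for `W` open. -/
def vietorisTop (Z : Type*) [TopologicalSpace Z] : TopologicalSpace (HClosed Z) :=
  TopologicalSpace.generateFrom
    ({s | ∃ W : Set Z, IsOpen W ∧ s = {A : HClosed Z | ((A : Set Z) ∩ W).Nonempty}} ∪
     {s | ∃ W : Set Z, IsOpen W ∧ s = {A : HClosed Z | (A : Set Z) ⊆ W}})

/-- The compact-open topology on a subgroup of the homeomorphism group of `X`, generated by
the sets `[K, O] = {g | g(K) ⊆ O}` for `K` compact and `O` open. -/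
def compactOpenTop {X : Type*} [TopologicalSpace X] (G : Subgroup (Equiv.Perm X)) :
    TopologicalSpace G :=
  TopologicalSpace.generateFrom
    {s : Set G | ∃ (K O : Set X), IsCompact K ∧ IsOpen O ∧
      s = {g : G | ∀ x ∈ K, (g : Equiv.Perm X) x ∈ O}}

/-
The graph map factors as `G → C(X, X) → 2^(X × X)`, and the first map is an embedding because
the compact-open topology on `G` is, by definition, induced from `C(X, X)`. For the graph map on
`C(X, Y)`: the preimage of a hit set `{A | A ∩ W ≠ ∅}` is `⋃ x, {f | (x, f x) ∈ W}`, and the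
preimage of a miss set `{A | A ⊆ W}` is `{f | (id, f) maps X into W}`, open because
`f ↦ (id, f)` is continuous and `X` is compact. Conversely, for `K` compact, hence closed,
`{f | f(K) ⊆ O} = {f | Γ(f) ⊆ Kᶜ × Y ∪ X × O}`.
-/

open Set

namespace ContinuousMap

variable {X Y : Type*} [TopologicalSpace X] [TopologicalSpace Y]

def graphClosed [T2Space Y] (f : C(X, Y)) : HClosed (X × Y) :=
  ⟨{p | p.2 = f p.1}, isClosed_eq continuous_snd (f.continuous.comp continuous_fst)⟩

theorem graphClosed_injective [T2Space Y] : Function.Injective (graphClosed : C(X, Y) → _) :=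
  fun f g hfg => ext fun x =>
    (by rw [← hfg]; rfl : (x, f x) ∈ (graphClosed g : Set (X × Y)))

theorem isOpen_setOf_exists_mk_apply_mem {W : Set (X × Y)} (hW : IsOpen W) :
    IsOpen {f : C(X, Y) | ∃ x, (x, f x) ∈ W} := by
  simp only [ofPred_exists]
  exact isOpen_iUnion fun x => hW.preimage (by fun_prop)

theorem continuous_id_prodMk [LocallyCompactPair X Y] :
    Continuous fun f : C(X, Y) => (ContinuousMap.id X).prodMk f :=
  continuous_of_continuous_uncurry _ (continuous_snd.prodMk continuous_eval)

theorem isOpen_setOf_forall_mk_apply_mem [CompactSpace X] [LocallyCompactPair X Y]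
    {W : Set (X × Y)} (hW : IsOpen W) :
    IsOpen {f : C(X, Y) | ∀ x, (x, f x) ∈ W} := by
  have := (isOpen_setOfPred_mapsTo isCompact_univ hW).preimage continuous_id_prodMk
  simpa [MapsTo] using this

theorem continuous_graphClosed [CompactSpace X] [LocallyCompactPair X Y] [T2Space Y] :
    Continuous[_, vietorisTop _] (graphClosed : C(X, Y) → HClosed (X × Y)) := by
  rw [vietorisTop, continuous_generateFrom_iff]
  rintro _ (⟨W, hW, rfl⟩ | ⟨W, hW, rfl⟩)
  · convert isOpen_setOf_exists_mk_apply_mem hW using 1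
    ext f
    simp [graphClosed, Set.Nonempty]
  · convert isOpen_setOf_forall_mk_apply_mem hW using 1
    ext f
    simp [graphClosed, subset_def]

theorem induced_graphClosed_le_compactOpen [T2Space X] [T2Space Y] :
    (vietorisTop (X × Y)).induced (graphClosed : C(X, Y) → _) ≤ compactOpen := by
  refine le_generateFrom ?_
  rintro _ ⟨K, hK, O, hO, rfl⟩
  refine ⟨{A | (A : Set (X × Y)) ⊆ Kᶜ ×ˢ univ ∪ univ ×ˢ O}, ?_, ?_⟩
  · exact .basic _ (.inr ⟨_, (hK.isClosed.isOpen_compl.prod isOpen_univ).union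
      (isOpen_univ.prod hO), rfl⟩)
  · ext f
    simp [graphClosed, subset_def, MapsTo, or_iff_not_imp_left]

theorem isEmbedding_graphClosed [CompactSpace X] [T2Space X] [T2Space Y] :
    @IsEmbedding _ _ _ (vietorisTop _) (graphClosed : C(X, Y) → HClosed (X × Y)) :=
  letI := vietorisTop (X × Y)
  ⟨⟨le_antisymm (continuous_iff_le_induced.1 continuous_graphClosed)
    induced_graphClosed_le_compactOpen⟩, graphClosed_injective⟩

end ContinuousMap

namespace Subgroup

variable {X : Type*} [TopologicalSpace X] (G : Subgroup (Equiv.Perm X))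
  (hG : ∀ g : G, Continuous ⇑(g : Equiv.Perm X))

theorem compactOpenTop_eq_induced :
    compactOpenTop G = ContinuousMap.compactOpen.induced fun g : G => (⟨g, hG g⟩ : C(X, X)) := by
  rw [ContinuousMap.compactOpen_eq, induced_generateFrom_eq, compactOpenTop]
  congr 1
  ext s
  simp [MapsTo, eq_comm, and_assoc]

theorem isEmbedding_toContinuousMap :
    @IsEmbedding _ _ (compactOpenTop G) _ fun g : G => (⟨g, hG g⟩ : C(X, X)) :=
  letI := compactOpenTop G
  ⟨⟨compactOpenTop_eq_induced G hG⟩, fun _ _ hgh =>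
    Subtype.ext (Equiv.ext (DFunLike.congr_fun hgh :))⟩

end Subgroup

/-- For a compact Hausdorff space `X` and a subgroup `G` of its homeomorphism group with the
compact-open topology, the graph map `g ↦ Γ(g)` is a topological embedding of `G` into the
hyperspace of closed subsets of `X × X` with the Vietoris topology. -/
theorem stmt_7 {X : Type*} [TopologicalSpace X] [CompactSpace X] [T2Space X]
    (G : Subgroup (Equiv.Perm X))
    (hhomeo : ∀ g : G, Continuous ⇑(g : Equiv.Perm X))
    (ι : G → HClosed (X × X))
    (hι : ∀ g : G, (ι g : Set (X × X)) = {p : X × X | p.2 = (g : Equiv.Perm X) p.1}) :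
    @IsEmbedding _ _ (compactOpenTop G) (vietorisTop (X × X)) ι := by
  obtain rfl : ι = ContinuousMap.graphClosed ∘ fun g : G => (⟨g, hhomeo g⟩ : C(X, X)) :=
    funext fun g => Subtype.ext (hι g)
  let := compactOpenTop G
  let := vietorisTop (X × X)
  exact ContinuousMap.isEmbedding_graphClosed.comp (G.isEmbedding_toContinuousMap hhomeo)
end

section
/- Let Y and X be locally compact Hausdorff spaces, G a group acting on Y and on X by homeomorphisms with the action on X faithful, and f : Y → X a perfect continuous surjection which is equivariant (f(g·y) = g·f(y) for all g ∈ G, y ∈ Y). Let F : 2^{Y×Y} → 2^{X×X}, F(A) = (f × f)(A), be the induced map of Fell hyperspaces, and let ι_Y(g) = Γ_Y(g) ⊆ Y × Y and ι_X(g) = Γ_X(g) ⊆ X × X be the graph maps of the two actions. Assume G carries a topology for which ι_Y : G → (2^{Y×Y}, τ_F) is a topological embedding. Then ι_X : G → (2^{X×X}, τ_F) is a topological embedding if and only if the following condition (PM) holds: for every g ∈ G and every R in the closure of ι_Y(G) in (2^{Y×Y}, τ_F), F(Γ_Y(g)) = F(R) implies Γ_Y(g) = R. -/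
open Topology

/-!
Since `f` is equivariant and surjective, `(f × f)(Γ_Y(g)) = Γ_X(g)`, i.e. `ι_X = F ∘ ι_Y`.
The Fell hyperspace is compact, and Hausdorff over a locally compact Hausdorff space, and `F` is
continuous because `f × f` is proper. For an embedding `ι` into a compact Hausdorff space and a
continuous `F` into a Hausdorff space, `F ∘ ι` is an embedding iff no point of the closure of
`range ι` other than `ι g` has the same image as `ι g`: by compactness a net `ι gᵢ` with
`F (ι gᵢ) → F (ι g)` clusters at some `R` in that closure with `F R = F (ι g)`.
-/

open Filter Set

section EmbeddingCriterion

variable {G A B : Type*} [TopologicalSpace G] [TopologicalSpace A] [TopologicalSpace B]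
  {ι : G → A} {F : A → B}

lemma eq_of_apply_eq_of_mem_closure_range [T2Space A] (hFι : IsInducing (F ∘ ι))
    (hι : Continuous ι) (hF : Continuous F) {g : G} {R : A} (hR : R ∈ closure (range ι))
    (hgR : F (ι g) = F R) : ι g = R := by
  obtain ⟨U, hU, hUR⟩ := mem_closure_iff_ultrafilter.1 hR
  have hmap : map ι (comap ι U) = U := map_comap_of_mem hU
  have : (comap ι (U : Filter A)).NeBot := NeBot.of_map (hmap ▸ U.neBot)
  have hιR : Tendsto ι (comap ι U) (𝓝 R) := by rw [Tendsto, hmap]; exact hUR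
  have hFιR : Tendsto (F ∘ ι) (comap ι U) (𝓝 (F (ι g))) := hgR ▸ (hF.tendsto R).comp hιR
  have hg : Tendsto id (comap ι (U : Filter A)) (𝓝 g) := hFι.tendsto_nhds_iff.2 hFιR
  exact tendsto_nhds_unique ((hι.tendsto g).comp hg) hιR

lemma isEmbedding_comp_of_eq_of_mem_closure_range [CompactSpace A] [T2Space B]
    (hι : IsEmbedding ι) (hF : Continuous F)
    (hPM : ∀ g, ∀ R ∈ closure (range ι), F (ι g) = F R → ι g = R) :
    IsEmbedding (F ∘ ι) := by
  refine ⟨isInducing_iff_nhds.2 fun g => le_antisymm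
    ((hF.comp hι.continuous).tendsto g).le_comap ?_, fun g h hgh => ?_⟩
  · rw [hι.nhds_eq_comap g, ← map_le_iff_le_comap, ← Tendsto, tendsto_iff_ultrafilter]
    intro U hU
    have hlim : Tendsto ι U (𝓝 (U.map ι).lim) := (U.map ι).le_nhds_lim
    have hmem : (U.map ι).lim ∈ closure (range ι) :=
      mem_closure_of_tendsto hlim (Eventually.of_forall mem_range_self)
    have hF_eq : F (ι g) = F (U.map ι).lim :=
      tendsto_nhds_unique (map_le_iff_le_comap.2 hU) ((hF.tendsto _).comp hlim)
    exact hPM g _ hmem hF_eq ▸ hlim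
  · exact hι.injective (hPM g (ι h) (subset_closure (mem_range_self h)) hgh)

theorem isEmbedding_comp_iff_eq_of_mem_closure_range [CompactSpace A] [T2Space A] [T2Space B]
    (hι : IsEmbedding ι) (hF : Continuous F) :
    IsEmbedding (F ∘ ι) ↔ ∀ g, ∀ R ∈ closure (range ι), F (ι g) = F R → ι g = R :=
  ⟨fun hFι _ _ hR hgR =>
      eq_of_apply_eq_of_mem_closure_range hFι.isInducing hι.continuous hF hR hgR,
    isEmbedding_comp_of_eq_of_mem_closure_range hι hF⟩

end EmbeddingCriterion

section Fell

attribute [local instance] fellTop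

variable {Z : Type*} [TopologicalSpace Z]

lemma isOpen_fell_inter_nonempty {W : Set Z} (hW : IsOpen W) :
    IsOpen {A : HClosed Z | ((A : Set Z) ∩ W).Nonempty} :=
  TopologicalSpace.isOpen_generateFrom_of_mem (Or.inl ⟨W, hW, rfl⟩)

lemma isOpen_fell_inter_eq_empty {K : Set Z} (hK : IsCompact K) :
    IsOpen {A : HClosed Z | (A : Set Z) ∩ K = ∅} :=
  TopologicalSpace.isOpen_generateFrom_of_mem (Or.inr ⟨K, hK, rfl⟩)

def fellLimitSet (U : Ultrafilter (HClosed Z)) : Set Z :=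
  {z | ∀ W : Set Z, IsOpen W → z ∈ W → {A : HClosed Z | ((A : Set Z) ∩ W).Nonempty} ∈ U}

lemma isClosed_fellLimitSet (U : Ultrafilter (HClosed Z)) : IsClosed (fellLimitSet U) := by
  refine isOpen_compl_iff.1 (isOpen_iff_forall_mem_open.2 fun z hz => ?_)
  simp only [fellLimitSet, mem_compl_iff, mem_ofPred_eq, not_forall] at hz
  obtain ⟨W, hW, hzW, hWU⟩ := hz
  exact ⟨W, fun w hw hwU => hWU (hwU W hW hw), hW, hzW⟩

lemma le_nhds_fellLimitSet (U : Ultrafilter (HClosed Z)) :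
    (U : Filter (HClosed Z)) ≤ 𝓝 ⟨fellLimitSet U, isClosed_fellLimitSet U⟩ := by
  refine tendsto_id'.1 (TopologicalSpace.tendsto_nhds_generateFrom_iff.2 ?_)
  rintro s (⟨W, hW, rfl⟩ | ⟨K, hK, rfl⟩) hs
  · obtain ⟨z, hzU, hzW⟩ := hs
    exact hzU W hW hzW
  · -- Each point of `K` is outside the limit set, so has a neighbourhood missed `U`-almost surely.
    refine hK.induction_on (p := fun s => {A : HClosed Z | (A : Set Z) ∩ s = ∅} ∈ U)
      (by simp only [inter_empty, ofPred_true]; exact univ_mem)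
      (fun s t hst ht => mem_of_superset ht fun A hA => ?_)
      (fun s t hs ht => mem_of_superset (inter_mem hs ht) fun A hA => ?_) fun z hz => ?_
    · exact subset_empty_iff.1 (hA ▸ inter_subset_inter_right _ hst)
    · simp only [mem_ofPred_eq, inter_union_distrib_left, union_empty_iff] at hA ⊢
      exact hA
    · have hzU : z ∉ fellLimitSet U := fun hzU => (hs.subset ⟨hzU, hz⟩ :)
      simp only [fellLimitSet, mem_ofPred_eq, not_forall] at hzU
      obtain ⟨W, hW, hzW, hWU⟩ := hzU
      refine ⟨W, mem_nhdsWithin_of_mem_nhds (hW.mem_nhds hzW), ?_⟩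
      simpa [compl_ofPred, not_nonempty_iff_eq_empty] using Ultrafilter.compl_mem_iff_notMem.2 hWU

instance fell_compactSpace : CompactSpace (HClosed Z) :=
  ⟨isCompact_iff_ultrafilter_le_nhds.2 fun U _ => ⟨_, mem_univ _, le_nhds_fellLimitSet U⟩⟩

lemma fell_exists_separation [LocallyCompactSpace Z] {A B : HClosed Z} {z : Z}
    (hzA : z ∈ (A : Set Z)) (hzB : z ∉ (B : Set Z)) :
    ∃ u v : Set (HClosed Z), IsOpen u ∧ IsOpen v ∧ A ∈ u ∧ B ∈ v ∧ Disjoint u v := by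
  obtain ⟨K, hKz, hKB, hK⟩ := local_compact_nhds (B.2.isOpen_compl.mem_nhds hzB)
  refine ⟨_, _, isOpen_fell_inter_nonempty isOpen_interior, isOpen_fell_inter_eq_empty hK,
    ⟨z, hzA, mem_interior_iff_mem_nhds.2 hKz⟩,
    eq_empty_iff_forall_notMem.2 fun w hw => hKB hw.2 hw.1, disjoint_left.2 ?_⟩
  rintro C ⟨w, hwC, hwK⟩ hC
  exact (hC.subset ⟨hwC, interior_subset hwK⟩ :)

instance fell_t2Space [LocallyCompactSpace Z] : T2Space (HClosed Z) := by
  refine ⟨fun A B hAB => ?_⟩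
  by_cases hsub : (A : Set Z) ⊆ B
  · obtain ⟨z, hzB, hzA⟩ := not_subset.1 fun hBA => hAB (Subtype.ext (hsub.antisymm hBA))
    obtain ⟨u, v, hu, hv, hBu, hAv, huv⟩ := fell_exists_separation hzB hzA
    exact ⟨v, u, hv, hu, hAv, hBu, huv.symm⟩
  · obtain ⟨z, hzA, hzB⟩ := not_subset.1 hsub
    exact fell_exists_separation hzA hzB

lemma continuous_fell_of_isProperMap {Z' : Type*} [TopologicalSpace Z'] {h : Z → Z'}
    (hh : IsProperMap h) {F : HClosed Z → HClosed Z'} (hF : ∀ A, (F A : Set Z') = h '' A) :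
    Continuous F := by
  refine continuous_generateFrom_iff.2 ?_
  rintro s (⟨W, hW, rfl⟩ | ⟨K, hK, rfl⟩)
  · have hpre : F ⁻¹' {B | ((B : Set Z') ∩ W).Nonempty} =
        {A : HClosed Z | ((A : Set Z) ∩ h ⁻¹' W).Nonempty} := by
      ext A
      simp only [mem_preimage, mem_ofPred_eq, hF, ← image_inter_preimage, image_nonempty]
    exact hpre ▸ isOpen_fell_inter_nonempty (hW.preimage hh.continuous)
  · have hpre : F ⁻¹' {B | (B : Set Z') ∩ K = ∅} =
        {A : HClosed Z | (A : Set Z) ∩ h ⁻¹' K = ∅} := by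
      ext A
      simp only [mem_preimage, mem_ofPred_eq, hF, ← image_inter_preimage, image_eq_empty]
    exact hpre ▸ isOpen_fell_inter_eq_empty (hh.isCompact_preimage hK)

end Fell

lemma image_prodMap_setOf_eq_smul {G Y X : Type*} [SMul G Y] [SMul G X] {f : Y → X}
    (hfs : Function.Surjective f) (hequiv : ∀ (g : G) (y : Y), f (g • y) = g • f y) (g : G) :
    (fun p : Y × Y => (f p.1, f p.2)) '' {p | p.2 = g • p.1} =
      {p : X × X | p.2 = g • p.1} := by
  ext ⟨a, b⟩
  constructor
  · rintro ⟨⟨y, _⟩, (rfl : _ = g • y), hab⟩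
    cases hab
    exact hequiv g y
  · rintro (rfl : b = g • a)
    obtain ⟨y, rfl⟩ := hfs a
    exact ⟨(y, g • y), rfl, by simp only [hequiv]⟩

theorem stmt_8_general {Y X G : Type*} [TopologicalSpace Y] [T2Space Y] [LocallyCompactSpace Y]
    [TopologicalSpace X] [T2Space X] [LocallyCompactSpace X]
    [Group G] [MulAction G Y] [MulAction G X]
    (f : Y → X) (hfc : Continuous f) (hfcl : IsClosedMap f)
    (hfib : ∀ x : X, IsCompact (f ⁻¹' {x})) (hfs : Function.Surjective f)
    (hequiv : ∀ (g : G) (y : Y), f (g • y) = g • f y)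
    (F : HClosed (Y × Y) → HClosed (X × X))
    (hF : ∀ A : HClosed (Y × Y),
      (F A : Set (X × X)) = (fun p : Y × Y => (f p.1, f p.2)) '' (A : Set (Y × Y)))
    (ιY : G → HClosed (Y × Y))
    (hιY : ∀ g : G, (ιY g : Set (Y × Y)) = {p : Y × Y | p.2 = g • p.1})
    (ιX : G → HClosed (X × X))
    (hιX : ∀ g : G, (ιX g : Set (X × X)) = {p : X × X | p.2 = g • p.1})
    (τ : TopologicalSpace G)
    (hemb : @IsEmbedding _ _ τ (fellTop (Y × Y)) ιY) :
    @IsEmbedding _ _ τ (fellTop (X × X)) ιX ↔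
      ∀ g : G, ∀ R ∈ @closure _ (fellTop (Y × Y)) (Set.range ιY),
        F (ιY g) = F R → ιY g = R := by
  let _ := τ
  let _ := fellTop (Y × Y)
  let _ := fellTop (X × X)
  have hfp : IsProperMap f := isProperMap_iff_isClosedMap_and_compact_fibers.2 ⟨hfc, hfcl, hfib⟩
  have hιX_eq : ιX = F ∘ ιY := funext fun g => Subtype.ext <| by
    rw [Function.comp_apply, hF, hιY, hιX, image_prodMap_setOf_eq_smul hfs hequiv]
  rw [hιX_eq]
  exact isEmbedding_comp_iff_eq_of_mem_closure_range hemb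
    (continuous_fell_of_isProperMap (hfp.prodMap hfp) hF)

/-- For a perfect equivariant continuous surjection `f : Y → X` of locally compact Hausdorff
`G`-spaces (the action on `X` being faithful), the graph map `ι_X` into the Fell hyperspace of
`X × X` is a topological embedding iff condition (PM) holds: for every `g ∈ G` and every `R` in
the closure of the graphs in the Fell hyperspace of `Y × Y`, `F(Γ_Y(g)) = F(R)` implies
`Γ_Y(g) = R`. -/
theorem stmt_8 {Y X G : Type*} [TopologicalSpace Y] [T2Space Y] [LocallyCompactSpace Y]
    [TopologicalSpace X] [T2Space X] [LocallyCompactSpace X]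
    [Group G] [MulAction G Y] [MulAction G X] [FaithfulSMul G X]
    (hgY : ∀ g : G, Continuous fun y : Y => g • y)
    (hgX : ∀ g : G, Continuous fun x : X => g • x)
    (f : Y → X) (hfc : Continuous f) (hfcl : IsClosedMap f)
    (hfib : ∀ x : X, IsCompact (f ⁻¹' {x})) (hfs : Function.Surjective f)
    (hequiv : ∀ (g : G) (y : Y), f (g • y) = g • f y)
    (F : HClosed (Y × Y) → HClosed (X × X))
    (hF : ∀ A : HClosed (Y × Y),
      (F A : Set (X × X)) = (fun p : Y × Y => (f p.1, f p.2)) '' (A : Set (Y × Y)))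
    (ιY : G → HClosed (Y × Y))
    (hιY : ∀ g : G, (ιY g : Set (Y × Y)) = {p : Y × Y | p.2 = g • p.1})
    (ιX : G → HClosed (X × X))
    (hιX : ∀ g : G, (ιX g : Set (X × X)) = {p : X × X | p.2 = g • p.1})
    (τ : TopologicalSpace G)
    (hemb : @IsEmbedding _ _ τ (fellTop (Y × Y)) ιY) :
    @IsEmbedding _ _ τ (fellTop (X × X)) ιX ↔
      ∀ g : G, ∀ R ∈ @closure _ (fellTop (Y × Y)) (Set.range ιY),
        F (ιY g) = F R → ιY g = R :=
  stmt_8_general f hfc hfcl hfib hfs hequiv F hF ιY hιY ιX hιX τ hemb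
end

section
/- Let Y be a locally compact Hausdorff space, X ⊆ Y an open subset, and G a group acting on Y by homeomorphisms such that g(X) = X for all g ∈ G and the induced action on X is faithful. Assume G carries a topology for which the graph map ι_Y : g ↦ Γ_Y(g) into (2^{Y×Y}, τ_F) is a topological embedding. Then the graph map ι_X : g ↦ Γ_X(g) = Γ_Y(g) ∩ (X × X) into (2^{X×X}, τ_F) is a topological embedding if and only if the following condition (R) holds: for every g ∈ G and every R in the closure of ι_Y(G) in (2^{Y×Y}, τ_F), R ∩ (X × X) = Γ_Y(g) ∩ (X × X) implies R = Γ_Y(g). -/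
open Topology

/-! Since `X × X` is open in `Y × Y`, the restriction `R ↦ R ∩ (X × X)` is Fell-continuous, and
`ι_X` is `ι_Y` followed by it. The Fell hyperspace is compact, and Hausdorff over a locally
compact base. For an embedding `f` into a compact Hausdorff space and a continuous `r`, the map
`r ∘ f` is an embedding iff `r` separates each `f g` from the other points of the closure of the
image: a filter whose image under `r ∘ f` tends to `r (f g)` has `f`-image clustering only at
points `a` of the closure with `r a = r (f g)`, and compactness turns "`f g` is the only cluster
point" into convergence to `f g`. -/

open Set Filter TopologicalSpace

theorem Set.preimage_eq_preimage_iff_inter_range {α β : Type*} {s t : Set α} {f : β → α} :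
    f ⁻¹' s = f ⁻¹' t ↔ s ∩ range f = t ∩ range f := by
  rw [← preimage_inter_range, ← preimage_inter_range (s := t),
    preimage_eq_preimage' inter_subset_right inter_subset_right]

section EmbeddingThroughCompact

variable {G A B : Type*} [TopologicalSpace G] [TopologicalSpace A] [TopologicalSpace B]
  {f : G → A} {r : A → B}

theorem Topology.IsInducing.eq_of_mem_closure_range_of_comp [T2Space A] (hf : Continuous f)
    (hr : Continuous r) (hrf : IsInducing (r ∘ f)) {g : G} {a : A}
    (ha : a ∈ closure (range f)) (hra : r a = r (f g)) : a = f g := by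
  have : (comap f (𝓝 a)).NeBot := comap_neBot_iff.2 fun t ht => by
    obtain ⟨_, hxt, x, rfl⟩ := mem_closure_iff_nhds.1 ha t ht
    exact ⟨x, hxt⟩
  have hg : comap f (𝓝 a) ≤ 𝓝 g := by
    rw [hrf.nhds_eq_comap, Function.comp_apply, ← hra, ← comap_comap]
    exact comap_mono (hr.tendsto a).le_comap
  exact tendsto_nhds_unique tendsto_comap ((hf.tendsto g).mono_left hg)

theorem isEmbedding_comp_of_forall_mem_closure_range [CompactSpace A] [T2Space B]
    (hf : IsEmbedding f) (hr : Continuous r)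
    (H : ∀ g, ∀ a ∈ closure (range f), r a = r (f g) → a = f g) : IsEmbedding (r ∘ f) := by
  refine ⟨isInducing_iff_nhds.2 fun g => le_antisymm ((hr.comp hf.continuous).tendsto g).le_comap
    ?_, fun g h hgh => hf.injective (H g _ (subset_closure (mem_range_self h)) hgh.symm).symm⟩
  rw [hf.nhds_eq_comap, ← map_le_iff_le_comap]
  refine le_nhds_of_unique_clusterPt fun a ha => H g a (ha.mem_closure_of_mem _ range_mem_map) ?_
  exact eq_of_nhds_neBot (ha.map hr.continuousAt (tendsto_map'_iff.2 tendsto_comap))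

theorem isEmbedding_comp_iff_forall_mem_closure_range [CompactSpace A] [T2Space A] [T2Space B]
    (hf : IsEmbedding f) (hr : Continuous r) :
    IsEmbedding (r ∘ f) ↔ ∀ g, ∀ a ∈ closure (range f), r a = r (f g) → a = f g :=
  ⟨fun hrf _ _ ha hra => hrf.isInducing.eq_of_mem_closure_range_of_comp hf.continuous hr ha hra,
    isEmbedding_comp_of_forall_mem_closure_range hf hr⟩

end EmbeddingThroughCompact

attribute [local instance] fellTop

namespace HClosed

variable {Z Z' : Type*} [TopologicalSpace Z] [TopologicalSpace Z']

theorem isOpen_setOf_inter_nonempty {W : Set Z} (hW : IsOpen W) :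
    IsOpen {F : HClosed Z | ((F : Set Z) ∩ W).Nonempty} :=
  isOpen_generateFrom_of_mem (Or.inl ⟨W, hW, rfl⟩)

theorem isOpen_setOf_inter_eq_empty {K : Set Z} (hK : IsCompact K) :
    IsOpen {F : HClosed Z | (F : Set Z) ∩ K = ∅} :=
  isOpen_generateFrom_of_mem (Or.inr ⟨K, hK, rfl⟩)

theorem le_nhds_iff {l : Filter (HClosed Z)} {A : HClosed Z} :
    l ≤ 𝓝 A ↔
      (∀ W, IsOpen W → ((A : Set Z) ∩ W).Nonempty →
        ∀ᶠ F : HClosed Z in l, ((F : Set Z) ∩ W).Nonempty) ∧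
      (∀ K, IsCompact K → (A : Set Z) ∩ K = ∅ →
        ∀ᶠ F : HClosed Z in l, (F : Set Z) ∩ K = ∅) := by
  refine (tendsto_nhds_generateFrom_iff (m := id)).trans
    ⟨fun h => ⟨fun W hW => h _ (.inl ⟨W, hW, rfl⟩), fun K hK => h _ (.inr ⟨K, hK, rfl⟩)⟩, ?_⟩
  rintro ⟨hit, miss⟩ s (⟨W, hW, rfl⟩ | ⟨K, hK, rfl⟩)
  exacts [hit W hW, miss K hK]

/-- The lower Kuratowski limit of `l`. -/
def limitSet (l : Filter (HClosed Z)) : Set Z :=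
  {z | ∀ W, IsOpen W → z ∈ W → ∀ᶠ F : HClosed Z in l, ((F : Set Z) ∩ W).Nonempty}

theorem isClosed_limitSet (l : Filter (HClosed Z)) : IsClosed (limitSet l) := by
  refine isOpen_compl_iff.1 (isOpen_iff_forall_mem_open.2 fun z hz => ?_)
  obtain ⟨W, hW, hzW, hWl⟩ : ∃ W, IsOpen W ∧ z ∈ W ∧
      ¬∀ᶠ F : HClosed Z in l, ((F : Set Z) ∩ W).Nonempty := by
    simpa [limitSet] using hz
  exact ⟨W, fun w hw hwl => hWl (hwl W hW hw), hW, hzW⟩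

theorem le_nhds_limitSet (U : Ultrafilter (HClosed Z)) :
    ↑U ≤ 𝓝 (⟨limitSet U, isClosed_limitSet (U : Filter (HClosed Z))⟩ : HClosed Z) := by
  refine le_nhds_iff.2 ⟨fun W hW ⟨z, hz, hzW⟩ => hz W hW hzW, fun K hK hUK => ?_⟩
  refine hK.induction_on (p := fun S => ∀ᶠ F : HClosed Z in U, (F : Set Z) ∩ S = ∅)
    (by simp)
    (fun S T hST hT => hT.mono fun F hF => subset_eq_empty (inter_subset_inter_right _ hST) hF)
    (fun S T hS hT => (hS.and hT).mono fun F hF => by simp [inter_union_distrib_left, hF.1, hF.2])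
    fun z hz => ?_
  have hzU : z ∉ limitSet U := fun h => (eq_empty_iff_forall_notMem.1 hUK) z ⟨h, hz⟩
  obtain ⟨W, hW, hzW, hWU⟩ : ∃ W, IsOpen W ∧ z ∈ W ∧
      ¬∀ᶠ F : HClosed Z in ↑U, ((F : Set Z) ∩ W).Nonempty := by
    simpa [limitSet] using hzU
  refine ⟨W, mem_nhdsWithin_of_mem_nhds (hW.mem_nhds hzW), ?_⟩
  simpa [Ultrafilter.eventually_not, not_nonempty_iff_eq_empty] using hWU

instance compactSpace : CompactSpace (HClosed Z) :=
  ⟨isCompact_iff_ultrafilter_le_nhds.2 fun U _ => ⟨_, mem_univ _, le_nhds_limitSet U⟩⟩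

theorem disjoint_nhds_of_mem_of_notMem [LocallyCompactSpace Z] {A B : HClosed Z} {z : Z}
    (hzA : z ∈ (A : Set Z)) (hzB : z ∉ (B : Set Z)) : Disjoint (𝓝 A) (𝓝 B) := by
  obtain ⟨K, hKz, hKB, hK⟩ := local_compact_nhds (B.2.isOpen_compl.mem_nhds hzB)
  have hA : {F : HClosed Z | ((F : Set Z) ∩ interior K).Nonempty} ∈ 𝓝 A :=
    (isOpen_setOf_inter_nonempty isOpen_interior).mem_nhds
      ⟨z, hzA, mem_interior_iff_mem_nhds.2 hKz⟩
  have hB : {F : HClosed Z | (F : Set Z) ∩ K = ∅} ∈ 𝓝 B :=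
    (isOpen_setOf_inter_eq_empty hK).mem_nhds
      (eq_empty_iff_forall_notMem.2 fun w hw => hKB hw.2 hw.1)
  refine disjoint_of_disjoint_of_mem (disjoint_left.2 ?_) hA hB
  rintro F ⟨w, hwF, hwK⟩ hFK
  exact (eq_empty_iff_forall_notMem.1 hFK) w ⟨hwF, interior_subset hwK⟩

instance t2Space [LocallyCompactSpace Z] : T2Space (HClosed Z) := by
  refine t2Space_iff_disjoint_nhds.2 fun A B hAB => ?_
  obtain ⟨z, hz⟩ : ∃ z, ¬(z ∈ (A : Set Z) ↔ z ∈ (B : Set Z)) := by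
    by_contra! h
    exact hAB (Subtype.ext (Set.ext h))
  by_cases hzA : z ∈ (A : Set Z)
  · exact disjoint_nhds_of_mem_of_notMem hzA fun hzB => hz (iff_of_true hzA hzB)
  · have hzB : z ∈ (B : Set Z) := by_contra fun hzB => hz (iff_of_false hzA hzB)
    exact (disjoint_nhds_of_mem_of_notMem hzB hzA).symm

def preimage (e : Z' → Z) (he : Continuous e) (R : HClosed Z) : HClosed Z' :=
  ⟨e ⁻¹' R, R.2.preimage he⟩

theorem preimage_eq_preimage_iff {e : Z' → Z} (he : Continuous e) {R S : HClosed Z} :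
    preimage e he R = preimage e he S ↔ (R : Set Z) ∩ range e = (S : Set Z) ∩ range e :=
  Subtype.ext_iff.trans preimage_eq_preimage_iff_inter_range

theorem continuous_preimage {e : Z' → Z} (he : Continuous e) (he' : IsOpenMap e) :
    Continuous (preimage e he) := by
  refine continuous_generateFrom_iff.2 ?_
  rintro s (⟨W, hW, rfl⟩ | ⟨K, hK, rfl⟩)
  · convert isOpen_setOf_inter_nonempty (he' W hW) using 1
    ext R
    simp [preimage, ← image_preimage_inter]
  · convert isOpen_setOf_inter_eq_empty (hK.image he) using 1
    ext R
    simp [preimage, ← image_preimage_inter]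

end HClosed

theorem stmt_9_general {Y G : Type*} [TopologicalSpace Y] [LocallyCompactSpace Y]
    [Group G] [MulAction G Y]
    (X : Set Y) (hXopen : IsOpen X)
    (ιY : G → HClosed (Y × Y))
    (hιY : ∀ g : G, (ιY g : Set (Y × Y)) = {p : Y × Y | p.2 = g • p.1})
    (ιX : G → HClosed (X × X))
    (hιX : ∀ g : G, (ιX g : Set (X × X)) =
      {p : X × X | (p.2 : Y) = g • (p.1 : Y)})
    (τ : TopologicalSpace G)
    (hemb : @IsEmbedding _ _ τ (fellTop (Y × Y)) ιY) :
    @IsEmbedding _ _ τ (fellTop (X × X)) ιX ↔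
      ∀ g : G, ∀ R ∈ @closure _ (fellTop (Y × Y)) (Set.range ιY),
        (R : Set (Y × Y)) ∩ X ×ˢ X = (ιY g : Set (Y × Y)) ∩ X ×ˢ X → R = ιY g := by
  let _ : TopologicalSpace G := τ
  have : LocallyCompactSpace X := hXopen.locallyCompactSpace
  let e : X × X → Y × Y := Prod.map (↑) (↑)
  have he : IsOpenEmbedding e :=
    hXopen.isOpenEmbedding_subtypeVal.prodMap hXopen.isOpenEmbedding_subtypeVal
  have hrange : range e = X ×ˢ X := by
    rw [range_prodMap, Subtype.range_coe]
  have hιXY : ιX = HClosed.preimage e he.continuous ∘ ιY :=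
    funext fun g => Subtype.ext (by rw [hιX]; exact congrArg (e ⁻¹' ·) (hιY g).symm)
  rw [hιXY, isEmbedding_comp_iff_forall_mem_closure_range hemb
    (HClosed.continuous_preimage he.continuous he.isOpenMap)]
  simp only [HClosed.preimage_eq_preimage_iff, hrange]

/-- For a locally compact Hausdorff `G`-space `Y` with an open invariant subset `X` on which the
action is faithful, the graph map `ι_X` into the Fell hyperspace of `X × X` is a topological
embedding iff condition (R) holds: for every `g ∈ G` and every `R` in the closure of the graphs
in the Fell hyperspace of `Y × Y`, `R ∩ (X × X) = Γ_Y(g) ∩ (X × X)` implies `R = Γ_Y(g)`. -/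
theorem stmt_9 {Y G : Type*} [TopologicalSpace Y] [T2Space Y] [LocallyCompactSpace Y]
    [Group G] [MulAction G Y]
    (hgY : ∀ g : G, Continuous fun y : Y => g • y)
    (X : Set Y) (hXopen : IsOpen X)
    (hinv : ∀ g : G, (fun y : Y => g • y) '' X = X)
    (hfaith : ∀ g h : G, (∀ y ∈ X, g • y = h • y) → g = h)
    (ιY : G → HClosed (Y × Y))
    (hιY : ∀ g : G, (ιY g : Set (Y × Y)) = {p : Y × Y | p.2 = g • p.1})
    (ιX : G → HClosed (X × X))
    (hιX : ∀ g : G, (ιX g : Set (X × X)) =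
      {p : X × X | (p.2 : Y) = g • (p.1 : Y)})
    (τ : TopologicalSpace G)
    (hemb : @IsEmbedding _ _ τ (fellTop (Y × Y)) ιY) :
    @IsEmbedding _ _ τ (fellTop (X × X)) ιX ↔
      ∀ g : G, ∀ R ∈ @closure _ (fellTop (Y × Y)) (Set.range ιY),
        (R : Set (Y × Y)) ∩ X ×ˢ X = (ιY g : Set (Y × Y)) ∩ X ×ˢ X → R = ιY g :=
  stmt_9_general X hXopen ιY hιY ιX hιX τ hemb
end

section
/- Let X be a locally compact Hausdorff space and G a group of homeomorphisms of X such that the family {g : X → X | g ∈ G} is topologically equicontinuous. Let αX = X ∪ {∞} be the one-point compactification and for g ∈ G let ĝ be its extension to αX with ĝ(∞) = ∞. Then for any R, S in the closure of {Γ(ĝ) : g ∈ G} in the hyperspace of closed subsets of αX × αX with the Vietoris topology, R ∩ (X × X) = S ∩ (X × X) implies R = S. -/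
/-- A family of self-maps of `X` is topologically equicontinuous if for all `x, y ∈ X` and every
open `O ∋ y` there are open sets `U ∋ x`, `V ∋ y` such that for every member `f` of the family,
`f(U) ∩ V ≠ ∅` implies `f(U) ⊆ O`. -/
def TopEquicontinuous {X : Type*} [TopologicalSpace X] (F : Set (X → X)) : Prop :=
  ∀ (x y : X) (O : Set X), IsOpen O → y ∈ O →
    ∃ U V : Set X, IsOpen U ∧ x ∈ U ∧ IsOpen V ∧ y ∈ V ∧
      ∀ f ∈ F, (f '' U ∩ V).Nonempty → f '' U ⊆ O

/-!
A member `T` of the closure is pinned down by `T ∩ (X × X)`: it always contains `(∞, ∞)`, and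
for `x ∈ X` it contains `(x, ∞)` exactly when it has no point `(x, y)` with `y ∈ X`. If it had
both, approximating graphs `Γ(ĝ)` would pass near `(x, y)` and near `(x, ∞)`, i.e. `g` would map
one small neighbourhood `U` of `x` both near `y` and near `∞`, which equicontinuity forbids.
Points `(∞, y)` are handled by the same argument after transposing, since the transpose of
`Γ(ĝ)` is `Γ(ĝ⁻¹)`.
-/

open Set OnePoint Topology

section Vietoris

variable {Z Z' : Type*} [TopologicalSpace Z] [TopologicalSpace Z']

theorem isOpen_vietoris_inter_nonempty {W : Set Z} (hW : IsOpen W) :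
    IsOpen[vietorisTop Z] {A : HClosed Z | ((A : Set Z) ∩ W).Nonempty} :=
  TopologicalSpace.isOpen_generateFrom_of_mem (Or.inl ⟨W, hW, rfl⟩)

theorem isOpen_vietoris_subset {W : Set Z} (hW : IsOpen W) :
    IsOpen[vietorisTop Z] {A : HClosed Z | (A : Set Z) ⊆ W} :=
  TopologicalSpace.isOpen_generateFrom_of_mem (Or.inr ⟨W, hW, rfl⟩)

theorem exists_mem_inter_nonempty_of_mem_closure_vietoris {𝒜 : Set (HClosed Z)} {T : HClosed Z}
    (hT : T ∈ closure[vietorisTop Z] 𝒜) {W₁ W₂ : Set Z}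
    (hW₁ : IsOpen W₁) (hW₂ : IsOpen W₂)
    (hT₁ : ((T : Set Z) ∩ W₁).Nonempty) (hT₂ : ((T : Set Z) ∩ W₂).Nonempty) :
    ∃ A ∈ 𝒜, ((A : Set Z) ∩ W₁).Nonempty ∧ ((A : Set Z) ∩ W₂).Nonempty := by
  let := vietorisTop Z
  obtain ⟨A, hA, hA𝒜⟩ := mem_closure_iff.mp hT _
    ((isOpen_vietoris_inter_nonempty hW₁).inter (isOpen_vietoris_inter_nonempty hW₂))
    ⟨hT₁, hT₂⟩
  exact ⟨A, hA𝒜, hA⟩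

theorem inter_nonempty_of_mem_closure_vietoris [CompactSpace Z] [T2Space Z]
    {𝒜 : Set (HClosed Z)} {T : HClosed Z} (hT : T ∈ closure[vietorisTop Z] 𝒜)
    {K : Set Z} (hK : IsCompact K) (h𝒜 : ∀ A ∈ 𝒜, ((A : Set Z) ∩ K).Nonempty) :
    ((T : Set Z) ∩ K).Nonempty := by
  let := vietorisTop Z
  rw [← not_disjoint_iff_nonempty_inter]
  intro hTK
  obtain ⟨U, V, -, hV, hKU, hTV, hUV⟩ :=
    SeparatedNhds.of_isCompact_isCompact hK T.2.isCompact hTK.symm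
  obtain ⟨A, hAV, hA𝒜⟩ := mem_closure_iff.mp hT _ (isOpen_vietoris_subset hV) hTV
  obtain ⟨p, hpA, hpK⟩ := h𝒜 A hA𝒜
  exact disjoint_left.mp hUV (hKU hpK) (hAV hpA)

def HClosed.image (e : Z ≃ₜ Z') (A : HClosed Z) : HClosed Z' :=
  ⟨e '' A, e.isClosedMap _ A.2⟩

theorem HClosed.continuous_image (e : Z ≃ₜ Z') :
    Continuous[vietorisTop Z, vietorisTop Z'] (HClosed.image e) := by
  let := vietorisTop Z
  refine continuous_generateFrom_iff.mpr ?_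
  rintro _ (⟨W, hW, rfl⟩ | ⟨W, hW, rfl⟩)
  · simpa only [preimage_ofPred_eq, HClosed.image, image_inter_nonempty_iff]
      using isOpen_vietoris_inter_nonempty (hW.preimage e.continuous)
  · simpa only [preimage_ofPred_eq, HClosed.image, image_subset_iff]
      using isOpen_vietoris_subset (hW.preimage e.continuous)

end Vietoris

section OnePointGraph

variable {X : Type*}

/-- The graph `Γ(f̂)` of the extension of `f : X → X` to `αX` fixing `∞`. -/
def onePointGraph (f : X → X) : Set (OnePoint X × OnePoint X) :=
  {p | (p.1 = ∞ ∧ p.2 = ∞) ∨ ∃ x : X, p.1 = x ∧ p.2 = f x}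

def onePointGraphs [TopologicalSpace X] (F : Set (X → X)) :
    Set (HClosed (OnePoint X × OnePoint X)) :=
  {A | ∃ f ∈ F, (A : Set (OnePoint X × OnePoint X)) = onePointGraph f}

@[simp]
theorem infty_infty_mem_onePointGraph (f : X → X) :
    ((∞, ∞) : OnePoint X × OnePoint X) ∈ onePointGraph f :=
  Or.inl ⟨rfl, rfl⟩

@[simp]
theorem coe_mk_mem_onePointGraph_iff {f : X → X} {x : X} {q : OnePoint X} :
    ((x : OnePoint X), q) ∈ onePointGraph f ↔ q = f x := by
  simp [onePointGraph]

theorem preimage_swap_onePointGraph (g : Equiv.Perm X) :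
    Prod.swap ⁻¹' onePointGraph ⇑g = onePointGraph ⇑g.symm := by
  ext ⟨a, b⟩
  induction b using OnePoint.rec <;> simp [onePointGraph, eq_comm, Equiv.eq_symm_apply]

end OnePointGraph

section Limits

variable {X : Type*} [TopologicalSpace X] [T2Space X] [LocallyCompactSpace X]
  {F : Set (X → X)} {T : HClosed (OnePoint X × OnePoint X)}

theorem infty_infty_mem_of_mem_closure
    (hT : T ∈ closure[vietorisTop (OnePoint X × OnePoint X)] (onePointGraphs F)) :
    ((∞, ∞) : OnePoint X × OnePoint X) ∈ (T : Set (OnePoint X × OnePoint X)) := by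
  obtain ⟨p, hpT, rfl⟩ := inter_nonempty_of_mem_closure_vietoris hT isCompact_singleton
    fun A ⟨f, _, hA⟩ => ⟨(∞, ∞), hA ▸ infty_infty_mem_onePointGraph f, rfl⟩
  exact hpT

theorem exists_coe_mk_mem_of_mem_closure
    (hT : T ∈ closure[vietorisTop (OnePoint X × OnePoint X)] (onePointGraphs F)) (x : X) :
    ∃ q : OnePoint X, ((x : OnePoint X), q) ∈ (T : Set (OnePoint X × OnePoint X)) := by
  obtain ⟨⟨_, q⟩, hpT, rfl, -⟩ := inter_nonempty_of_mem_closure_vietoris hT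
    (isCompact_singleton.prod isCompact_univ)
    fun A ⟨f, _, hA⟩ => ⟨((x : OnePoint X), (f x : OnePoint X)), by simp [hA], rfl, trivial⟩
  exact ⟨q, hpT⟩

theorem coe_infty_notMem_of_mem_closure (hF : TopEquicontinuous F)
    (hT : T ∈ closure[vietorisTop (OnePoint X × OnePoint X)] (onePointGraphs F)) {x y : X}
    (hxy : ((x : OnePoint X), (y : OnePoint X)) ∈ (T : Set (OnePoint X × OnePoint X))) :
    ((x : OnePoint X), ∞) ∉ (T : Set (OnePoint X × OnePoint X)) := by
  intro hxInf
  obtain ⟨O, N, hO, hN, hyO, hInfN, hON⟩ := t2_separation (coe_ne_infty y)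
  obtain ⟨U, V, hU, hxU, hV, hyV, hUV⟩ :=
    hF x y (((↑) : X → OnePoint X) ⁻¹' O) (hO.preimage continuous_coe) hyO
  obtain ⟨A, ⟨f, hfF, hA⟩, ⟨⟨_, q⟩, hqA, ⟨u, huU, rfl⟩, ⟨v, hvV, rfl⟩⟩,
      ⟨⟨_, r⟩, hrA, ⟨w, hwU, rfl⟩, hrN⟩⟩ :=
    exists_mem_inter_nonempty_of_mem_closure_vietoris hT
      ((isOpenMap_coe U hU).prod (isOpenMap_coe V hV)) ((isOpenMap_coe U hU).prod hN)
      ⟨_, hxy, mk_mem_prod (mem_image_of_mem _ hxU) (mem_image_of_mem _ hyV)⟩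
      ⟨_, hxInf, mk_mem_prod (mem_image_of_mem _ hxU) hInfN⟩
  rw [hA, coe_mk_mem_onePointGraph_iff, coe_eq_coe] at hqA
  rw [hA, coe_mk_mem_onePointGraph_iff] at hrA
  have hfU : f '' U ⊆ (↑) ⁻¹' O := hUV f hfF ⟨v, ⟨u, huU, hqA.symm⟩, hvV⟩
  exact disjoint_left.mp hON (hfU (mem_image_of_mem f hwU)) (hrA ▸ hrN)

theorem coe_infty_mem_iff_of_mem_closure (hF : TopEquicontinuous F)
    (hT : T ∈ closure[vietorisTop (OnePoint X × OnePoint X)] (onePointGraphs F)) (x : X) :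
    ((x : OnePoint X), ∞) ∈ (T : Set (OnePoint X × OnePoint X)) ↔
      ∀ y : X, ((x : OnePoint X), (y : OnePoint X)) ∉ (T : Set (OnePoint X × OnePoint X)) := by
  refine ⟨fun hxInf y hxy => coe_infty_notMem_of_mem_closure hF hT hxy hxInf, fun h => ?_⟩
  obtain ⟨q, hq⟩ := exists_coe_mk_mem_of_mem_closure hT x
  induction q using OnePoint.rec
  · exact hq
  · exact absurd hq (h _)

end Limits

section Group

variable {X : Type*} [TopologicalSpace X] {G : Subgroup (Equiv.Perm X)}
  {T : HClosed (OnePoint X × OnePoint X)}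

theorem image_prodComm_mem_closure
    (hT : T ∈ closure[vietorisTop (OnePoint X × OnePoint X)]
      (onePointGraphs {f : X → X | ∃ g : G, f = ⇑(g : Equiv.Perm X)})) :
    HClosed.image (Homeomorph.prodComm _ _) T ∈ closure[vietorisTop (OnePoint X × OnePoint X)]
      (onePointGraphs {f : X → X | ∃ g : G, f = ⇑(g : Equiv.Perm X)}) := by
  let := vietorisTop (OnePoint X × OnePoint X)
  have hswap : HClosed.image (Homeomorph.prodComm _ _) ''
      onePointGraphs {f : X → X | ∃ g : G, f = ⇑(g : Equiv.Perm X)} ⊆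
      onePointGraphs {f : X → X | ∃ g : G, f = ⇑(g : Equiv.Perm X)} := by
    rintro _ ⟨A, ⟨_, ⟨g, rfl⟩, hA⟩, rfl⟩
    refine ⟨_, ⟨g⁻¹, rfl⟩, ?_⟩
    simp only [HClosed.image, Homeomorph.coe_prodComm, image_swap_eq_preimage_swap, hA,
      preimage_swap_onePointGraph]
    rfl
  exact closure_mono hswap
    (image_closure_subset_closure_image (HClosed.continuous_image _) ⟨T, hT, rfl⟩)

theorem infty_coe_mem_iff_of_mem_closure [T2Space X] [LocallyCompactSpace X]
    (hG : TopEquicontinuous {f : X → X | ∃ g : G, f = ⇑(g : Equiv.Perm X)})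
    (hT : T ∈ closure[vietorisTop (OnePoint X × OnePoint X)]
      (onePointGraphs {f : X → X | ∃ g : G, f = ⇑(g : Equiv.Perm X)})) (y : X) :
    (∞, (y : OnePoint X)) ∈ (T : Set (OnePoint X × OnePoint X)) ↔
      ∀ x : X, ((x : OnePoint X), (y : OnePoint X)) ∉ (T : Set (OnePoint X × OnePoint X)) := by
  simpa only [HClosed.image, Homeomorph.coe_prodComm, image_swap_eq_preimage_swap, mem_preimage,
    Prod.swap_prod_mk] using coe_infty_mem_iff_of_mem_closure hG (image_prodComm_mem_closure hT) y

end Group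

theorem stmt_10_general {X : Type*} [TopologicalSpace X] [T2Space X] [LocallyCompactSpace X]
    (G : Subgroup (Equiv.Perm X))
    (hequi : TopEquicontinuous {f : X → X | ∃ g : G, f = ⇑(g : Equiv.Perm X)})
    (ι : G → HClosed (OnePoint X × OnePoint X))
    (hι : ∀ g : G, (ι g : Set (OnePoint X × OnePoint X)) =
      {p : OnePoint X × OnePoint X |
        (p.1 = OnePoint.infty ∧ p.2 = OnePoint.infty) ∨
        ∃ x : X, p.1 = (x : OnePoint X) ∧ p.2 = (((g : Equiv.Perm X) x : X) : OnePoint X)})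
    (R S : HClosed (OnePoint X × OnePoint X))
    (hR : R ∈ @closure _ (vietorisTop (OnePoint X × OnePoint X)) (Set.range ι))
    (hS : S ∈ @closure _ (vietorisTop (OnePoint X × OnePoint X)) (Set.range ι))
    (hRS : (R : Set (OnePoint X × OnePoint X)) ∩
        {p | p.1 ≠ OnePoint.infty ∧ p.2 ≠ OnePoint.infty} =
      (S : Set (OnePoint X × OnePoint X)) ∩
        {p | p.1 ≠ OnePoint.infty ∧ p.2 ≠ OnePoint.infty}) :
    R = S := by
  have hRS_coe : ∀ x y : X, ((x : OnePoint X), (y : OnePoint X)) ∈ (R : Set _) ↔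
      ((x : OnePoint X), (y : OnePoint X)) ∈ (S : Set _) := fun x y => by
    simpa [coe_ne_infty] using Set.ext_iff.mp hRS (x, y)
  have hgraphs : range ι ⊆ onePointGraphs {f : X → X | ∃ g : G, f = ⇑(g : Equiv.Perm X)} :=
    range_subset_iff.mpr fun g => ⟨_, ⟨g, rfl⟩, hι g⟩
  replace hR := @closure_mono _ (vietorisTop _) _ _ hgraphs _ hR
  replace hS := @closure_mono _ (vietorisTop _) _ _ hgraphs _ hS
  refine Subtype.ext (Set.ext fun ⟨a, b⟩ => ?_)
  induction a using OnePoint.rec <;> induction b using OnePoint.rec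
  · simp only [infty_infty_mem_of_mem_closure hR, infty_infty_mem_of_mem_closure hS]
  · simp only [infty_coe_mem_iff_of_mem_closure hequi hR,
      infty_coe_mem_iff_of_mem_closure hequi hS, hRS_coe]
  · simp only [coe_infty_mem_iff_of_mem_closure hequi hR,
      coe_infty_mem_iff_of_mem_closure hequi hS, hRS_coe]
  · exact hRS_coe _ _

/-- If a group `G` of homeomorphisms of a locally compact Hausdorff space `X` is topologically
equicontinuous, then two members of the closure (in the Vietoris hyperspace of `αX × αX`) of the
graphs of the extensions `ĝ` to the one-point compactification that agree on `X × X` are equal. -/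
theorem stmt_10 {X : Type*} [TopologicalSpace X] [T2Space X] [LocallyCompactSpace X]
    (G : Subgroup (Equiv.Perm X))
    (hhomeo : ∀ g : G, Continuous ⇑(g : Equiv.Perm X))
    (hequi : TopEquicontinuous {f : X → X | ∃ g : G, f = ⇑(g : Equiv.Perm X)})
    (ι : G → HClosed (OnePoint X × OnePoint X))
    (hι : ∀ g : G, (ι g : Set (OnePoint X × OnePoint X)) =
      {p : OnePoint X × OnePoint X |
        (p.1 = OnePoint.infty ∧ p.2 = OnePoint.infty) ∨
        ∃ x : X, p.1 = (x : OnePoint X) ∧ p.2 = (((g : Equiv.Perm X) x : X) : OnePoint X)})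
    (R S : HClosed (OnePoint X × OnePoint X))
    (hR : R ∈ @closure _ (vietorisTop (OnePoint X × OnePoint X)) (Set.range ι))
    (hS : S ∈ @closure _ (vietorisTop (OnePoint X × OnePoint X)) (Set.range ι))
    (hRS : (R : Set (OnePoint X × OnePoint X)) ∩
        {p | p.1 ≠ OnePoint.infty ∧ p.2 ≠ OnePoint.infty} =
      (S : Set (OnePoint X × OnePoint X)) ∩
        {p | p.1 ≠ OnePoint.infty ∧ p.2 ≠ OnePoint.infty}) :
    R = S :=
  stmt_10_general G hequi ι hι R S hR hS hRS
end

section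
/- Let X be a compact Hausdorff space and G a group of homeomorphisms of X. Then every R in the closure of {Γ(g) : g ∈ G} in the hyperspace of closed subsets of X × X with the Vietoris topology satisfies pr₁(R) = X and pr₂(R) = X, where pr₁ and pr₂ are the projections of X × X onto the first and second coordinate. -/
open scoped Topology

namespace vietorisTop

variable {Z : Type*} [TopologicalSpace Z]

theorem isOpen_setOf_subset {W : Set Z} (hW : IsOpen W) :
    IsOpen[vietorisTop Z] {A : HClosed Z | (A : Set Z) ⊆ W} :=
  TopologicalSpace.GenerateOpen.basic _ (Or.inr ⟨W, hW, rfl⟩)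

theorem exists_mem_subset_of_mem_closure {S : Set (HClosed Z)} {R : HClosed Z}
    (hR : R ∈ closure[vietorisTop Z] S) {W : Set Z} (hW : IsOpen W)
    (hRW : (R : Set Z) ⊆ W) : ∃ A ∈ S, (A : Set Z) ⊆ W := by
  obtain ⟨A, hAW, hAS⟩ := (@mem_closure_iff _ (vietorisTop Z) _ _).mp hR _
    (isOpen_setOf_subset hW) hRW
  exact ⟨A, hAS, hAW⟩

theorem image_eq_univ_of_mem_closure {Y : Type*} [TopologicalSpace Y] [T1Space Y]
    {f : Z → Y} (hf : Continuous f) {S : Set (HClosed Z)}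
    (hS : ∀ A ∈ S, f '' (A : Set Z) = Set.univ) {R : HClosed Z}
    (hR : R ∈ closure[vietorisTop Z] S) : f '' (R : Set Z) = Set.univ := by
  refine Set.eq_univ_of_forall fun y => by_contra fun hy => ?_
  have hRW : (R : Set Z) ⊆ f ⁻¹' {y}ᶜ := fun z hz hzy => hy ⟨z, hz, hzy⟩
  obtain ⟨A, hAS, hAW⟩ :=
    exists_mem_subset_of_mem_closure hR (isOpen_compl_singleton.preimage hf) hRW
  obtain ⟨z, hz, hzy⟩ := (hS A hAS).symm ▸ Set.mem_univ y
  exact hAW hz hzy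

end vietorisTop

section

variable {X : Type*} (g : Equiv.Perm X)

theorem fst_image_permGraph_eq_univ : Prod.fst '' {p : X × X | p.2 = g p.1} = Set.univ :=
  Set.eq_univ_of_forall fun x => ⟨(x, g x), rfl, rfl⟩

theorem snd_image_permGraph_eq_univ : Prod.snd '' {p : X × X | p.2 = g p.1} = Set.univ :=
  Set.eq_univ_of_forall fun x => ⟨(g.symm x, x), (g.apply_symm_apply x).symm, rfl⟩

end

theorem stmt_12_general {X : Type*} [TopologicalSpace X] [T2Space X]
    (G : Subgroup (Equiv.Perm X))
    (ι : G → HClosed (X × X))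
    (hι : ∀ g : G, (ι g : Set (X × X)) = {p : X × X | p.2 = (g : Equiv.Perm X) p.1})
    (R : HClosed (X × X))
    (hR : R ∈ @closure _ (vietorisTop (X × X)) (Set.range ι)) :
    Prod.fst '' (R : Set (X × X)) = Set.univ ∧
    Prod.snd '' (R : Set (X × X)) = Set.univ := by
  constructor
  · refine vietorisTop.image_eq_univ_of_mem_closure continuous_fst ?_ hR
    rintro _ ⟨g, rfl⟩
    rw [hι g]
    exact fst_image_permGraph_eq_univ _
  · refine vietorisTop.image_eq_univ_of_mem_closure continuous_snd ?_ hR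
    rintro _ ⟨g, rfl⟩
    rw [hι g]
    exact snd_image_permGraph_eq_univ _

/-- For a compact Hausdorff space `X` and a group `G` of homeomorphisms of `X`, every member of
the closure of the set of graphs in the Vietoris hyperspace of `X × X` has full projections onto
both coordinates. -/
theorem stmt_12 {X : Type*} [TopologicalSpace X] [CompactSpace X] [T2Space X]
    (G : Subgroup (Equiv.Perm X))
    (hhomeo : ∀ g : G, Continuous ⇑(g : Equiv.Perm X))
    (ι : G → HClosed (X × X))
    (hι : ∀ g : G, (ι g : Set (X × X)) = {p : X × X | p.2 = (g : Equiv.Perm X) p.1})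
    (R : HClosed (X × X))
    (hR : R ∈ @closure _ (vietorisTop (X × X)) (Set.range ι)) :
    Prod.fst '' (R : Set (X × X)) = Set.univ ∧
    Prod.snd '' (R : Set (X × X)) = Set.univ :=
  stmt_12_general G ι hι R hR
end

section
/- Let X be an infinite set and G a group of permutations of X acting ultratransitively. Identify subsets of X × X with points of the product space {0,1}^{X×X} carrying the product topology. Then the closure of {Γ(g) : g ∈ G} in this space is exactly the set I_X of all partial injections of X, i.e., the relations R ⊆ X × X such that (x, y₁), (x, y₂) ∈ R imply y₁ = y₂ and (x₁, y), (x₂, y) ∈ R imply x₁ = x₂ (including R = ∅). -/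
/-!
A basic neighbourhood of `R` in `{0,1}^{X×X}` prescribes membership on a finite set `I ⊆ X × X`.
Being a partial injection is a condition on two points at a time, so partial injections form a
closed set containing all graphs. Conversely, a partial injection `R` is matched on `I` by an
injection defined on the first coordinates of `I` which follows `R` where `R` meets `I` and sends
the remaining points injectively outside the second coordinates of `I` (possible as `X` is
infinite); ultratransitivity extends this finite injection to an element of `G`.
-/

/-- The product topology on `Set Z`, each factor `Prop` carrying the discrete topology
(this is the topology of the Cantor cube `{0,1}^Z`). -/
def setTop (Z : Type*) : TopologicalSpace (Set Z) :=
  TopologicalSpace.induced (fun (A : Set Z) (z : Z) => z ∈ A)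
    (@Pi.topologicalSpace Z (fun _ => Prop) fun _ => ⊥)

/-- A group of permutations of `X` acts ultratransitively if any injective finite tuple can be
mapped onto any other injective finite tuple of the same length by a member of the group. -/
def Ultratransitive {X : Type*} (G : Subgroup (Equiv.Perm X)) : Prop :=
  ∀ (n : ℕ) (x y : Fin n → X), Function.Injective x → Function.Injective y →
    ∃ g : G, ∀ i : Fin n, (g : Equiv.Perm X) (x i) = y i

/-- A partial injection of `X`: a relation which is the graph of an injection defined on a
subset of `X`. -/
def PartialInjection {X : Type*} (R : Set (X × X)) : Prop :=
  (∀ x y₁ y₂, (x, y₁) ∈ R → (x, y₂) ∈ R → y₁ = y₂) ∧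
  (∀ x₁ x₂ y, (x₁, y) ∈ R → (x₂, y) ∈ R → x₁ = x₂)

open Set Function Topology

theorem nhds_setTop {Z : Type*} (R : Set Z) :
    @nhds (Set Z) (setTop Z) R = Filter.pi fun z => pure (z ∈ R) := by
  let _ : TopologicalSpace Prop := ⊥
  have _ : DiscreteTopology Prop := ⟨rfl⟩
  have h := @nhds_pi Z (fun _ => Prop) (fun _ => ⊥) R
  rw [← induced_id (t := @Pi.topologicalSpace Z (fun _ => Prop) fun _ => ⊥)] at h
  simp only [nhds_discrete] at h
  exact h

theorem nhds_setTop_hasBasis {Z : Type*} (R : Set Z) :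
    (@nhds (Set Z) (setTop Z) R).HasBasis Set.Finite
      (fun I => {A | ∀ z ∈ I, (z ∈ A ↔ z ∈ R)}) := by
  have h := Filter.hasBasis_pi_pure (fun z => z ∈ R)
  simp only [eq_iff_iff] at h
  rw [nhds_setTop]
  exact h

theorem mem_closure_setTop_iff {Z : Type*} {S : Set (Set Z)} {R : Set Z} :
    R ∈ @closure _ (setTop Z) S ↔
      ∀ I : Set Z, I.Finite → ∃ A ∈ S, ∀ z ∈ I, (z ∈ A ↔ z ∈ R) :=
  let _ := setTop Z
  mem_closure_iff_nhds_basis (nhds_setTop_hasBasis R)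

theorem partialInjection_graph {X : Type*} {f : X → X} (hf : Injective f) :
    PartialInjection {p : X × X | p.2 = f p.1} :=
  ⟨fun _ _ _ h₁ h₂ => h₁.trans h₂.symm, fun _ _ _ h₁ h₂ => hf (h₁.symm.trans h₂)⟩

theorem isClosed_setOf_partialInjection (X : Type*) :
    IsClosed[setTop (X × X)] {R : Set (X × X) | PartialInjection R} := by
  let _ := setTop (X × X)
  refine closure_subset_iff_isClosed.mp fun R hR => ?_
  rw [mem_closure_setTop_iff] at hR
  constructor
  · intro x y₁ y₂ h₁ h₂
    obtain ⟨A, hA, hAR⟩ := hR {(x, y₁), (x, y₂)} (toFinite _)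
    exact hA.1 x y₁ y₂ ((hAR _ (by simp)).2 h₁) ((hAR _ (by simp)).2 h₂)
  · intro x₁ x₂ y h₁ h₂
    obtain ⟨A, hA, hAR⟩ := hR {(x₁, y), (x₂, y)} (toFinite _)
    exact hA.2 x₁ x₂ y ((hAR _ (by simp)).2 h₁) ((hAR _ (by simp)).2 h₂)

theorem Ultratransitive.exists_eqOn {X : Type*} {G : Subgroup (Equiv.Perm X)}
    (hG : Ultratransitive G) {s : Set X} (hs : s.Finite) {f : X → X} (hf : InjOn f s) :
    ∃ g : G, EqOn (g : Equiv.Perm X) f s := by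
  have := hs.to_subtype
  let e := (Finite.equivFin s).symm
  obtain ⟨g, hg⟩ := hG _ (fun i => (e i : X)) (fun i => f (e i))
    (Subtype.val_injective.comp e.injective) (hf.injective.comp e.injective)
  refine ⟨g, fun a ha => ?_⟩
  simpa only [Equiv.apply_symm_apply] using hg (e.symm ⟨a, ha⟩)

theorem PartialInjection.exists_injOn_agree {X : Type*} [Infinite X] {R : Set (X × X)}
    (hR : PartialInjection R) {I : Set (X × X)} (hI : I.Finite) :
    ∃ f : X → X, InjOn f (Prod.fst '' I) ∧ ∀ p ∈ I, (p.2 = f p.1 ↔ p ∈ R) := by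
  classical
  set T := Prod.snd '' I
  -- Off the domain of `I ∩ R`, `f` takes values outside `T`, so it creates no spurious pair of `I`.
  obtain ⟨φ, hφT, hφ⟩ : ∃ φ : X → X, Prod.fst '' I ⊆ φ ⁻¹' Tᶜ ∧ InjOn φ (Prod.fst '' I) :=
    (hI.image Prod.fst).exists_injOn_of_encard_le <| by
      rw [(hI.image Prod.snd).infinite_compl.encard_eq]
      exact le_top
  let f a := if h : ∃ b, (a, b) ∈ I ∩ R then h.choose else φ a
  have hf_mem : ∀ a, (h : ∃ b, (a, b) ∈ I ∩ R) → (a, f a) ∈ I ∩ R := fun a h => by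
    simpa only [f, dif_pos h] using h.choose_spec
  have hf_fresh : ∀ a, (¬∃ b, (a, b) ∈ I ∩ R) → f a = φ a := fun a h => dif_neg h
  have hf_T : ∀ a ∈ Prod.fst '' I, (f a ∈ T ↔ ∃ b, (a, b) ∈ I ∩ R) := fun a ha =>
    ⟨fun hfa => by_contra fun h => hφT ha (hf_fresh a h ▸ hfa),
      fun h => mem_image_of_mem _ (hf_mem a h).1⟩
  refine ⟨f, fun a₁ ha₁ a₂ ha₂ heq => ?_, fun p hp => ?_⟩
  · by_cases h₁ : ∃ b, (a₁, b) ∈ I ∩ R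
    · have h₂ := (hf_T a₂ ha₂).1 (heq ▸ (hf_T a₁ ha₁).2 h₁)
      exact hR.2 _ _ _ (hf_mem _ h₁).2 (heq ▸ (hf_mem _ h₂).2)
    · have h₂ : ¬∃ b, (a₂, b) ∈ I ∩ R := fun h₂ =>
        h₁ ((hf_T a₁ ha₁).1 (heq ▸ (hf_T a₂ ha₂).2 h₂))
      exact hφ ha₁ ha₂ (by rwa [← hf_fresh _ h₁, ← hf_fresh _ h₂])
  · by_cases h : ∃ b, (p.1, b) ∈ I ∩ R
    · refine ⟨fun hpf => ?_, fun hpR => hR.1 _ _ _ hpR (hf_mem _ h).2⟩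
      simpa [← hpf] using (hf_mem _ h).2
    · refine ⟨fun hpf => ?_, fun hpR => (h ⟨p.2, hp, hpR⟩).elim⟩
      exact (h ((hf_T _ (mem_image_of_mem _ hp)).1 (hpf ▸ mem_image_of_mem _ hp))).elim

theorem Ultratransitive.exists_graph_agree {X : Type*} [Infinite X] {G : Subgroup (Equiv.Perm X)}
    (hG : Ultratransitive G) {R : Set (X × X)} (hR : PartialInjection R) {I : Set (X × X)}
    (hI : I.Finite) : ∃ g : G, ∀ p ∈ I, (p.2 = (g : Equiv.Perm X) p.1 ↔ p ∈ R) := by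
  obtain ⟨f, hf, hfR⟩ := hR.exists_injOn_agree hI
  obtain ⟨g, hg⟩ := hG.exists_eqOn (hI.image Prod.fst) hf
  exact ⟨g, fun p hp => hg (mem_image_of_mem _ hp) ▸ hfR p hp⟩

/-- For an ultratransitive group `G` of permutations of an infinite set `X`, the closure of the
set of graphs of elements of `G` in `{0,1}^{X×X}` is exactly the set of all partial injections
of `X`. -/
theorem stmt_13 {X : Type*} [Infinite X] (G : Subgroup (Equiv.Perm X))
    (hG : Ultratransitive G) :
    @closure _ (setTop (X × X))
        {R : Set (X × X) | ∃ g : G, R = {p : X × X | p.2 = (g : Equiv.Perm X) p.1}} =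
      {R : Set (X × X) | PartialInjection R} := by
  let _ := setTop (X × X)
  apply subset_antisymm
  · refine closure_minimal ?_ (isClosed_setOf_partialInjection X)
    rintro _ ⟨g, rfl⟩
    exact partialInjection_graph (g : Equiv.Perm X).injective
  · intro R hR
    rw [mem_closure_setTop_iff]
    intro I hI
    obtain ⟨g, hg⟩ := hG.exists_graph_agree hR hI
    exact ⟨_, ⟨g, rfl⟩, hg⟩
end

section
/- Let X be an infinite set and G a group of permutations of X acting ultratransitively. Let αX = X ∪ {∞} be the one-point compactification of the discrete space X, and for g ∈ G let ĝ : αX → αX be the extension of g with ĝ(∞) = ∞. Let E be the closure of {ĝ : g ∈ G} in the product space (αX)^{αX}. Then the map Ψ : E → {0,1}^{X×X}, Ψ(f) = {(x, y) ∈ X × X : f(x) = y}, is a homeomorphism of E onto the closure of {Γ(g) : g ∈ G} in {0,1}^{X×X} (with the product topology), and Ψ(ĝ) = Γ(g) for all g ∈ G. -/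
/-!
The graph map `Ψ` is continuous from the compact space `(αX)^{αX}` to the Hausdorff space
`{0,1}^{X×X}`, because each coordinate of `Ψ` tests `f(x) = y` against the clopen point `y` of
`αX`. It is therefore a closed map, so it carries the closure of `{ĝ}` onto the closure of the
graphs. Every limit of the `ĝ` still fixes `∞`, and such a map is determined by its graph:
`f(x) = ∞` exactly when no `(x, y)` lies in `Ψ(f)`. A continuous injection from a compact space
into a Hausdorff space is a homeomorphism onto its image.
-/

open Set Topology

lemma t2Space_setTop (Z : Type*) : @T2Space (Set Z) (setTop Z) := by
  let _ : TopologicalSpace Prop := ⊥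
  have _ : DiscreteTopology Prop := ⟨rfl⟩
  let _ : TopologicalSpace (Set Z) := setTop Z
  have hemb : IsEmbedding fun (A : Set Z) (z : Z) => z ∈ A :=
    ⟨⟨rfl⟩, fun A B h => Set.ext fun z => iff_of_eq (congrFun h z)⟩
  exact hemb.t2Space

lemma continuous_setTop_of_isClopen {α Z : Type*} [TopologicalSpace α] {f : α → Set Z}
    (hf : ∀ z, IsClopen {a | z ∈ f a}) : @Continuous α (Set Z) _ (setTop Z) f := by
  let _ : TopologicalSpace Prop := ⊥
  have _ : DiscreteTopology Prop := ⟨rfl⟩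
  rw [setTop, continuous_induced_rng]
  refine continuous_pi fun z => continuous_discrete_rng.2 fun b => ?_
  by_cases hb : b
  · convert (hf z).isOpen using 1
    ext a
    simp [hb]
  · convert (hf z).compl.isOpen using 1
    ext a
    simp [hb]

lemma Set.InjOn.exists_homeomorph_image {α β : Type*} [TopologicalSpace α] [TopologicalSpace β]
    [CompactSpace α] [T2Space β] {f : α → β} {s : Set α} (hinj : InjOn f s)
    (hf : Continuous f) (hs : IsClosed s) :
    ∃ Φ : s ≃ₜ f '' s, ∀ x, (Φ x : β) = f x := by
  have _ : CompactSpace s := isCompact_iff_compactSpace.1 hs.isCompact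
  have hemb : IsEmbedding (s.domRestrict f) :=
    ((hf.comp continuous_subtype_val).isClosedEmbedding hinj.injective).isEmbedding
  exact ⟨hemb.toHomeomorph.trans (Homeomorph.setCongr (range_domRestrict f s)), fun _ => rfl⟩

namespace OnePoint

variable {X : Type*}

/-- The map `Ψ`: the part of the graph of `f` that lies in `X × X`. -/
def traceGraph (f : OnePoint X → OnePoint X) : Set (X × X) :=
  {p | f p.1 = p.2}

lemma traceGraph_eq_of_map_coe {f : OnePoint X → OnePoint X} {g : X → X}
    (hf : ∀ x : X, f x = g x) : traceGraph f = {p | p.2 = g p.1} := by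
  ext p
  simp [traceGraph, hf, eq_comm]

lemma traceGraph_injOn : InjOn (traceGraph (X := X)) {f | f ∞ = ∞} := by
  intro f₁ hf₁ f₂ hf₂ h
  have hmem : ∀ x y : X, f₁ x = y ↔ f₂ x = y := fun x y => Set.ext_iff.1 h (x, y)
  funext z
  induction z using OnePoint.rec with
  | infty => exact hf₁.trans hf₂.symm
  | coe x =>
    induction h₁ : f₁ x using OnePoint.rec with
    | infty =>
      induction h₂ : f₂ x using OnePoint.rec with
      | infty => rfl
      | coe y => exact absurd ((hmem x y).2 h₂) (by simp [h₁])
    | coe y => exact ((hmem x y).1 h₁).symm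

variable [TopologicalSpace X] [DiscreteTopology X]

lemma isClopen_singleton_coe (y : X) : IsClopen {(y : OnePoint X)} :=
  ⟨isClosed_singleton, by simpa using isOpen_image_coe.2 (isOpen_discrete {y})⟩

lemma continuous_traceGraph :
    @Continuous _ _ _ (setTop (X × X)) (traceGraph (X := X)) :=
  continuous_setTop_of_isClopen fun p =>
    (isClopen_singleton_coe p.2).preimage (continuous_apply (p.1 : OnePoint X))

end OnePoint

open OnePoint

theorem stmt_15_general {X : Type*} [TopologicalSpace X] [DiscreteTopology X]
    (G : Subgroup (Equiv.Perm X))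
    (extg : G → OnePoint X → OnePoint X)
    (hext_inf : ∀ g : G, extg g OnePoint.infty = OnePoint.infty)
    (hext_coe : ∀ (g : G) (x : X),
      extg g (x : OnePoint X) = (((g : Equiv.Perm X) x : X) : OnePoint X))
    (E : Set (OnePoint X → OnePoint X)) (hE : E = closure (Set.range extg))
    (C : Set (Set (X × X)))
    (hC : C = @closure _ (setTop (X × X))
      {R : Set (X × X) | ∃ g : G, R = {p : X × X | p.2 = (g : Equiv.Perm X) p.1}})
    (Psi : (OnePoint X → OnePoint X) → Set (X × X))
    (hPsi : ∀ f : OnePoint X → OnePoint X,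
      Psi f = {p : X × X | f (p.1 : OnePoint X) = (p.2 : OnePoint X)}) :
    Psi '' E = C ∧
    (∃ Φ : @Homeomorph ↥E ↥C inferInstance
        (@instTopologicalSpaceSubtype _ _ (setTop (X × X))),
      ∀ f : ↥E, ((Φ f : ↥C) : Set (X × X)) = Psi (f : OnePoint X → OnePoint X)) ∧
    (∀ g : G, Psi (extg g) = {p : X × X | p.2 = (g : Equiv.Perm X) p.1}) := by
  let _ := setTop (X × X)
  have _ := t2Space_setTop (X × X)
  obtain rfl : Psi = traceGraph := funext hPsi
  have hgraph (g : G) : traceGraph (extg g) = {p : X × X | p.2 = (g : Equiv.Perm X) p.1} :=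
    traceGraph_eq_of_map_coe (hext_coe g)
  have hE_fix : E ⊆ {f | f ∞ = ∞} := hE ▸
    closure_minimal (range_subset_iff.2 hext_inf) (isClosed_singleton.preimage (continuous_apply _))
  have himg : traceGraph '' E = C := by
    rw [hE, hC, ← continuous_traceGraph.isClosedMap.closure_image_eq_of_continuous
      continuous_traceGraph, ← range_comp]
    congr 1
    ext R
    simp [hgraph, eq_comm]
  obtain ⟨Φ, hΦ⟩ := (traceGraph_injOn.mono hE_fix).exists_homeomorph_image
    continuous_traceGraph (hE ▸ isClosed_closure)
  exact ⟨himg, ⟨Φ.trans (Homeomorph.setCongr himg), hΦ⟩, hgraph⟩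

/-- For an ultratransitive permutation group `G` of an infinite discrete space `X`, the map
`Ψ(f) = {(x,y) | f(x) = y}` is a homeomorphism of the Ellis semigroup `E` (the closure of the
extensions `ĝ` in `(αX)^{αX}`) onto the closure `C` of the graphs in `{0,1}^{X×X}`, sending
`ĝ` to `Γ(g)`. -/
theorem stmt_15 {X : Type*} [TopologicalSpace X] [DiscreteTopology X] [Infinite X]
    (G : Subgroup (Equiv.Perm X)) (hG : Ultratransitive G)
    (extg : G → OnePoint X → OnePoint X)
    (hext_inf : ∀ g : G, extg g OnePoint.infty = OnePoint.infty)
    (hext_coe : ∀ (g : G) (x : X),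
      extg g (x : OnePoint X) = (((g : Equiv.Perm X) x : X) : OnePoint X))
    (E : Set (OnePoint X → OnePoint X)) (hE : E = closure (Set.range extg))
    (C : Set (Set (X × X)))
    (hC : C = @closure _ (setTop (X × X))
      {R : Set (X × X) | ∃ g : G, R = {p : X × X | p.2 = (g : Equiv.Perm X) p.1}})
    (Psi : (OnePoint X → OnePoint X) → Set (X × X))
    (hPsi : ∀ f : OnePoint X → OnePoint X,
      Psi f = {p : X × X | f (p.1 : OnePoint X) = (p.2 : OnePoint X)}) :
    Psi '' E = C ∧
    (∃ Φ : @Homeomorph ↥E ↥C inferInstance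
        (@instTopologicalSpaceSubtype _ _ (setTop (X × X))),
      ∀ f : ↥E, ((Φ f : ↥C) : Set (X × X)) = Psi (f : OnePoint X → OnePoint X)) ∧
    (∀ g : G, Psi (extg g) = {p : X × X | p.2 = (g : Equiv.Perm X) p.1}) :=
  stmt_15_general G extg hext_inf hext_coe E hE C hC Psi hPsi
end

section
/- Let X be an uncountable set and I_X ⊆ {0,1}^{X×X} the set of all partial injections of X with the product topology. Then the set I_X ∖ {Γ(g) : g a bijection of X} meets every nonempty G_δ subset of I_X; equivalently, the complement in I_X of the set of graphs of total bijections of X is G_δ-dense in I_X. In particular, every nonempty G_δ subset of I_X containing the graph of a bijection also contains a partial injection that is not the graph of a bijection. -/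
theorem PartialInjection.mono {X : Type*} {R S : Set (X × X)} (hR : PartialInjection R)
    (hSR : S ⊆ R) : PartialInjection S :=
  ⟨fun x y₁ y₂ h₁ h₂ => hR.1 x y₁ y₂ (hSR h₁) (hSR h₂),
    fun x₁ x₂ y h₁ h₂ => hR.2 x₁ x₂ y (hSR h₁) (hSR h₂)⟩

section SetTop

attribute [local instance] setTop

variable {Z : Type*}

theorem exists_finset_forall_mem_of_isOpen {U : Set (Set Z)} (hU : IsOpen U) {A : Set Z}
    (hA : A ∈ U) : ∃ I : Finset Z, ∀ B : Set Z, (∀ z ∈ I, z ∈ B ↔ z ∈ A) → B ∈ U := by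
  obtain ⟨W, hW, rfl⟩ := hU
  -- explicit instances: the default topology on `Prop` is the Sierpiński one, not the discrete one
  obtain ⟨I, u, hu, hIW⟩ := (@isOpen_pi_iff Z (fun _ => Prop) (fun _ => ⊥) W).mp hW _ hA
  refine ⟨I, fun B hB => hIW fun z hz => ?_⟩
  show (z ∈ B) ∈ u z
  rw [propext (hB z hz)]
  exact (hu z hz).2

theorem exists_countable_forall_mem_of_isGδ {p : Set Z → Prop} {T : Set (Subtype p)}
    (hT : IsGδ T) {R₀ : Subtype p} (hR₀ : R₀ ∈ T) :
    ∃ C : Set Z, C.Countable ∧ ∀ R : Subtype p, (∀ z ∈ C, z ∈ R.1 ↔ z ∈ R₀.1) → R ∈ T := by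
  obtain ⟨S, hSopen, hScount, rfl⟩ := hT
  have hfinite : ∀ s ∈ S, ∃ I : Finset Z,
      ∀ R : Subtype p, (∀ z ∈ I, z ∈ R.1 ↔ z ∈ R₀.1) → R ∈ s := by
    intro s hs
    obtain ⟨V, hV, rfl⟩ := isOpen_induced_iff.mp (hSopen s hs)
    obtain ⟨I, hI⟩ := exists_finset_forall_mem_of_isOpen hV (hR₀ _ hs)
    exact ⟨I, fun R hR => hI R.1 hR⟩
  choose! I hI using hfinite
  exact ⟨⋃ s ∈ S, I s, hScount.biUnion fun s _ => (I s).countable_toSet,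
    fun R hR s hs => hI s hs R fun z hz => hR z (Set.mem_biUnion hs hz)⟩

end SetTop

/-- For an uncountable set `X`, the set of partial injections that are not graphs of total
bijections of `X` is `G_δ`-dense in the space `I_X` of all partial injections of `X` (a
subspace of `{0,1}^{X×X}`): it meets every nonempty `G_δ` subset of `I_X`. -/
theorem stmt_17 {X : Type*} [Uncountable X]
    (T : Set {R : Set (X × X) // PartialInjection R})
    (hT : @IsGδ _ (@instTopologicalSpaceSubtype _ _ (setTop (X × X))) T)
    (hne : T.Nonempty) :
    ∃ R ∈ T, ¬ ∃ g : Equiv.Perm X, (R : Set (X × X)) = {p : X × X | p.2 = g p.1} := by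
  obtain ⟨R₀, hR₀⟩ := hne
  obtain ⟨C, hC, hCT⟩ := exists_countable_forall_mem_of_isGδ hT hR₀
  obtain ⟨x₀, hx₀⟩ := (Set.ne_univ_iff_exists_notMem (Prod.fst '' C)).mp
    fun h => Set.not_countable_univ (h ▸ hC.image Prod.fst)
  let R : Set (X × X) := R₀.1 ∩ {p | p.1 ≠ x₀}
  refine ⟨⟨R, R₀.2.mono Set.inter_subset_left⟩, hCT _ fun z hz => ?_, ?_⟩
  · have hz₀ : z.1 ≠ x₀ := fun h => hx₀ ⟨z, hz, h⟩
    simp [R, hz₀]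
  · rintro ⟨g, hg⟩
    have hR : R = {p : X × X | p.2 = g p.1} := hg
    have hx₀R : (x₀, g x₀) ∈ R := hR ▸ rfl
    exact hx₀R.2 rfl
end

section
/- Let X be an infinite ultrahomogeneous linear order and K a complete linear order with least element ⊥ and greatest element ⊤, endowed with the order topology, containing X and such that every k ∈ K satisfies k = sup{x ∈ X : x ≤ k} and k = inf{x ∈ X : k ≤ x}. For each order-automorphism g of X define ĝ : K → K by ĝ(k) = sup{g(x) : x ∈ X, x ≤ k}. Then each ĝ is an order-automorphism and a homeomorphism of K extending g, and the closure of {Γ(ĝ) : g ∈ Aut(X)} in the hyperspace of nonempty closed subsets of K × K with the Vietoris topology equals the set of all nonempty closed A ⊆ K × K such that A is linearly ordered by the coordinatewise (product) order, A is connected, and pr₁(A) = pr₂(A) = K (i.e., A is a linearly ordered continuum with full projections). -/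
/-- A linear order is ultrahomogeneous if any increasing finite tuple can be mapped onto any
other increasing tuple of the same length by an order-automorphism. -/
def UltrahomogeneousOrder (X : Type*) [LinearOrder X] : Prop :=
  ∀ (n : ℕ) (x y : Fin n → X), StrictMono x → StrictMono y →
    ∃ g : X ≃o X, ∀ i : Fin n, g (x i) = y i

open Set Filter Topology

namespace UltrahomogeneousOrder

variable {X : Type*} [LinearOrder X]

lemma exists_between_of_lt_of_lt (hX : UltrahomogeneousOrder X) {a b c : X} (hab : a < b)
    (hbc : b < c) {x y : X} (hxy : x < y) : ∃ z, x < z ∧ z < y := by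
  obtain ⟨g, hg⟩ := hX 2 ![a, c] ![x, y] (by simpa using hab.trans hbc) (by simpa using hxy)
  have ha : g a = x := hg 0
  have hc : g c = y := hg 1
  exact ⟨g b, ha ▸ g.strictMono hab, hc ▸ g.strictMono hbc⟩

lemma denselyOrdered [Infinite X] (hX : UltrahomogeneousOrder X) : DenselyOrdered X where
  dense x y hxy := by
    obtain ⟨z, hz⟩ := Infinite.exists_notMem_finset ({x, y} : Finset X)
    simp only [Finset.mem_insert, Finset.mem_singleton, not_or, ← ne_eq] at hz
    rcases hz.1.lt_or_gt with hzx | hxz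
    · exact hX.exists_between_of_lt_of_lt hzx hxy hxy
    rcases hz.2.lt_or_gt with hzy | hyz
    · exact ⟨z, hxz, hzy⟩
    · exact hX.exists_between_of_lt_of_lt hxy hyz hxy

end UltrahomogeneousOrder

section SupInfDense

variable {X K : Type*} [LinearOrder X] [CompleteLinearOrder K] (e : X ↪o K)

def SupInfDense : Prop :=
  ∀ k : K, k = sSup ((fun x : X => e x) '' {x : X | e x ≤ k}) ∧
    k = sInf ((fun x : X => e x) '' {x : X | k ≤ e x})

variable {e}

lemma SupInfDense.exists_le_lt (he : SupInfDense e) {u v : K} (h : u < v) :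
    ∃ x, u ≤ e x ∧ e x < v := by
  rw [(he u).2, sInf_lt_iff] at h
  obtain ⟨_, ⟨x, hx, rfl⟩, hxv⟩ := h
  exact ⟨x, hx, hxv⟩

lemma SupInfDense.exists_lt_le (he : SupInfDense e) {u v : K} (h : u < v) :
    ∃ x, u < e x ∧ e x ≤ v := by
  rw [(he v).1, lt_sSup_iff] at h
  obtain ⟨_, ⟨x, hx, rfl⟩, hux⟩ := h
  exact ⟨x, hux, hx⟩

lemma SupInfDense.exists_lt_lt [DenselyOrdered X] (he : SupInfDense e) {u v : K} (h : u < v) :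
    ∃ x, u < e x ∧ e x < v := by
  obtain ⟨x, hux, hxv⟩ := he.exists_le_lt h
  rcases hux.lt_or_eq with hux | rfl
  · exact ⟨x, hux, hxv⟩
  obtain ⟨y, hxy, hyv⟩ := he.exists_lt_le h
  rcases hyv.lt_or_eq with hyv | rfl
  · exact ⟨y, hxy, hyv⟩
  obtain ⟨z, hxz, hzy⟩ := exists_between (e.lt_iff_lt.1 hxy)
  exact ⟨z, e.strictMono hxz, e.strictMono hzy⟩

lemma SupInfDense.denselyOrdered [DenselyOrdered X] (he : SupInfDense e) : DenselyOrdered K where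
  dense _ _ h := let ⟨x, hx⟩ := he.exists_lt_lt h; ⟨e x, hx⟩

end SupInfDense

section SupExtension

variable {X K : Type*} [LinearOrder X] [CompleteLinearOrder K] (e : X ↪o K)

def supExtension (g : X → X) (k : K) : K :=
  sSup ((fun x : X => e (g x)) '' {x : X | e x ≤ k})

lemma monotone_supExtension (g : X → X) : Monotone (supExtension e g) :=
  fun _ _ hkk' => sSup_le_sSup (image_mono fun _ hx => le_trans hx hkk')

lemma le_supExtension (g : X → X) {x : X} {k : K} (h : e x ≤ k) : e (g x) ≤ supExtension e g k :=
  le_sSup ⟨x, h, rfl⟩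

lemma supExtension_apply_embedding {g : X → X} (hg : Monotone g) (x : X) :
    supExtension e g (e x) = e (g x) := by
  refine le_antisymm (sSup_le ?_) (le_supExtension e g le_rfl)
  rintro _ ⟨x', hx', rfl⟩
  exact e.monotone (hg (e.le_iff_le.1 hx'))

variable {e}

lemma SupInfDense.le_supExtension_symm_supExtension (he : SupInfDense e) (g : X ≃o X) (k : K) :
    k ≤ supExtension e g.symm (supExtension e g k) := by
  conv_lhs => rw [(he k).1]
  refine sSup_le ?_
  rintro _ ⟨x, hx, rfl⟩
  calc e x = supExtension e g.symm (e (g x)) := by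
        rw [supExtension_apply_embedding e g.symm.monotone, g.symm_apply_apply]
    _ ≤ _ := monotone_supExtension e _ (le_supExtension e g hx)

lemma SupInfDense.supExtension_symm_supExtension_le (he : SupInfDense e) (g : X ≃o X) (k : K) :
    supExtension e g.symm (supExtension e g k) ≤ k := by
  conv_rhs => rw [(he k).2]
  refine le_sInf ?_
  rintro _ ⟨z, hz, rfl⟩
  refine sSup_le ?_
  rintro _ ⟨y, hy, rfl⟩
  have hyz : y ≤ g z := by
    rw [← e.le_iff_le, ← supExtension_apply_embedding e g.monotone]
    exact hy.trans (monotone_supExtension e g hz)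
  exact e.monotone (g.symm_apply_le.2 hyz)

lemma SupInfDense.supExtension_symm_supExtension (he : SupInfDense e) (g : X ≃o X) (k : K) :
    supExtension e g.symm (supExtension e g k) = k :=
  (he.supExtension_symm_supExtension_le g k).antisymm (he.le_supExtension_symm_supExtension g k)

def SupInfDense.supExtensionIso (he : SupInfDense e) (g : X ≃o X) : K ≃o K :=
  Equiv.toOrderIso
    { toFun := supExtension e g
      invFun := supExtension e g.symm
      left_inv := he.supExtension_symm_supExtension g
      right_inv k := by simpa using he.supExtension_symm_supExtension g.symm k }
    (monotone_supExtension e g) (monotone_supExtension e g.symm)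

@[simp]
lemma SupInfDense.coe_supExtensionIso (he : SupInfDense e) (g : X ≃o X) :
    ⇑(he.supExtensionIso g) = supExtension e g :=
  rfl

end SupExtension

namespace Vietoris

variable {Z : Type*} [TopologicalSpace Z]

attribute [local instance] vietorisTop

lemma isOpen_setOf_inter_nonempty {W : Set Z} (hW : IsOpen W) :
    IsOpen {A : HClosed Z | ((A : Set Z) ∩ W).Nonempty} :=
  TopologicalSpace.GenerateOpen.basic _ (Or.inl ⟨W, hW, rfl⟩)

lemma isOpen_setOf_subset {W : Set Z} (hW : IsOpen W) :
    IsOpen {A : HClosed Z | (A : Set Z) ⊆ W} :=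
  TopologicalSpace.GenerateOpen.basic _ (Or.inr ⟨W, hW, rfl⟩)

lemma exists_basic_nhds {U : Set (HClosed Z)} (hU : IsOpen U) {A : HClosed Z}
    (hA : A ∈ U) :
    ∃ (W : Set Z) (𝒱 : Set (Set Z)), IsOpen W ∧ (A : Set Z) ⊆ W ∧ 𝒱.Finite ∧
      (∀ V ∈ 𝒱, IsOpen V ∧ ((A : Set Z) ∩ V).Nonempty) ∧
      ∀ B : HClosed Z, (B : Set Z) ⊆ W → (∀ V ∈ 𝒱, ((B : Set Z) ∩ V).Nonempty) → B ∈ U := by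
  induction hU generalizing A with
  | basic s hs =>
    rcases hs with ⟨V, hV, rfl⟩ | ⟨W, hW, rfl⟩
    · exact ⟨univ, {V}, isOpen_univ, subset_univ _, finite_singleton V, by simpa using ⟨hV, hA⟩,
        fun B _ hB => hB V rfl⟩
    · exact ⟨W, ∅, hW, hA, finite_empty, by simp, fun B hB _ => hB⟩
  | univ => exact ⟨univ, ∅, isOpen_univ, subset_univ _, finite_empty, by simp, fun _ _ _ => trivial⟩
  | inter U₁ U₂ _ _ ih₁ ih₂ =>
    obtain ⟨W₁, 𝒱₁, hW₁, hAW₁, h𝒱₁, hV₁, hB₁⟩ := ih₁ hA.1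
    obtain ⟨W₂, 𝒱₂, hW₂, hAW₂, h𝒱₂, hV₂, hB₂⟩ := ih₂ hA.2
    refine ⟨W₁ ∩ W₂, 𝒱₁ ∪ 𝒱₂, hW₁.inter hW₂, subset_inter hAW₁ hAW₂, h𝒱₁.union h𝒱₂,
      fun V hV => hV.elim (hV₁ V) (hV₂ V), fun B hBW hBV => ⟨?_, ?_⟩⟩
    · exact hB₁ B (hBW.trans inter_subset_left) fun V hV => hBV V (Or.inl hV)
    · exact hB₂ B (hBW.trans inter_subset_right) fun V hV => hBV V (Or.inr hV)
  | sUnion 𝒮 _ ih =>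
    obtain ⟨s, hs𝒮, hAs⟩ := hA
    obtain ⟨W, 𝒱, hW, hAW, h𝒱, hV, hB⟩ := ih s hs𝒮 hAs
    exact ⟨W, 𝒱, hW, hAW, h𝒱, hV, fun B hBW hBV => ⟨s, hs𝒮, hB B hBW hBV⟩⟩

lemma isClosed_setOf_forall_mem_forall_mem {R : Z → Z → Prop}
    (hR : IsClosed {p : Z × Z | R p.1 p.2}) :
    IsClosed {A : HClosed Z | ∀ p ∈ (A : Set Z), ∀ q ∈ (A : Set Z), R p q} := by
  rw [← isOpen_compl_iff, isOpen_iff_forall_mem_open]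
  intro A hA
  simp only [mem_compl_iff, mem_ofPred_eq, not_forall] at hA
  obtain ⟨p, hp, q, hq, hpq⟩ := hA
  obtain ⟨O₁, O₂, hO₁, hO₂, hpO, hqO, hO⟩ :=
    isOpen_prod_iff.1 hR.isOpen_compl p q hpq
  refine ⟨{B | ((B : Set Z) ∩ O₁).Nonempty} ∩ {B | ((B : Set Z) ∩ O₂).Nonempty}, ?_,
    (isOpen_setOf_inter_nonempty hO₁).inter (isOpen_setOf_inter_nonempty hO₂),
    ⟨p, hp, hpO⟩, ⟨q, hq, hqO⟩⟩
  rintro B ⟨⟨p', hp'B, hp'⟩, ⟨q', hq'B, hq'⟩⟩ hB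
  exact hO (mk_mem_prod hp' hq') (hB p' hp'B q' hq'B)

lemma isClosed_setOf_nonempty : IsClosed {A : HClosed Z | (A : Set Z).Nonempty} := by
  rw [← isOpen_compl_iff]
  convert isOpen_setOf_subset (Z := Z) isOpen_empty using 1
  ext A
  simp [subset_empty_iff, not_nonempty_iff_eq_empty]

lemma isClosed_setOf_isPreconnected [NormalSpace Z] :
    IsClosed {A : HClosed Z | IsPreconnected (A : Set Z)} := by
  rw [← isOpen_compl_iff, isOpen_iff_forall_mem_open]
  intro A hA
  simp only [mem_compl_iff, mem_ofPred_eq, isPreconnected_iff_subset_of_fully_disjoint_closed A.2,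
    not_forall, not_or] at hA
  obtain ⟨u, v, hu, hv, hAuv, huv, hAu, hAv⟩ := hA
  obtain ⟨O₁, O₂, hO₁, hO₂, huO, hvO, hO⟩ := normal_separation hu hv huv
  obtain ⟨a, haA, hau⟩ := not_subset.1 hAu
  obtain ⟨b, hbA, hbv⟩ := not_subset.1 hAv
  refine ⟨{B | (B : Set Z) ⊆ O₁ ∪ O₂} ∩
      ({B | ((B : Set Z) ∩ O₁).Nonempty} ∩ {B | ((B : Set Z) ∩ O₂).Nonempty}), ?_,
    (isOpen_setOf_subset (hO₁.union hO₂)).inter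
      ((isOpen_setOf_inter_nonempty hO₁).inter (isOpen_setOf_inter_nonempty hO₂)),
    hAuv.trans (union_subset_union huO hvO),
    ⟨b, hbA, huO ((hAuv hbA).resolve_right hbv)⟩, ⟨a, haA, hvO ((hAuv haA).resolve_left hau)⟩⟩
  rintro B ⟨hBO, hB₁, hB₂⟩ hB
  obtain ⟨z, -, hz₁, hz₂⟩ := hB O₁ O₂ hO₁ hO₂ hBO hB₁ hB₂
  exact hO.le_bot ⟨hz₁, hz₂⟩

lemma isClosed_setOf_isConnected [NormalSpace Z] :
    IsClosed {A : HClosed Z | IsConnected (A : Set Z)} :=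
  isClosed_setOf_nonempty.inter isClosed_setOf_isPreconnected

lemma isClosed_setOf_image_eq_univ {Y : Type*} [TopologicalSpace Y] [T1Space Y] {f : Z → Y}
    (hf : Continuous f) :
    IsClosed {A : HClosed Z | f '' (A : Set Z) = univ} := by
  rw [← isOpen_compl_iff, isOpen_iff_forall_mem_open]
  intro A hA
  obtain ⟨y, hy⟩ := (ne_univ_iff_exists_notMem _).1 hA
  refine ⟨{B | (B : Set Z) ⊆ f ⁻¹' {y}ᶜ}, fun B hB hBf => ?_,
    isOpen_setOf_subset (isOpen_compl_singleton.preimage hf), fun z hz hzy => hy ⟨z, hz, hzy⟩⟩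
  obtain ⟨z, hz, hzy⟩ := hBf.symm ▸ mem_univ y
  exact hB hz hzy

end Vietoris

section Graph

variable {α β : Type*}

lemma Monotone.isChain_graph [LinearOrder α] [Preorder β] {f : α → β} (hf : Monotone f) :
    IsChain (· ≤ ·) {p : α × β | p.2 = f p.1} := by
  intro p hp q hq _
  rcases le_total p.1 q.1 with h | h
  · exact Or.inl ⟨h, hp.symm ▸ hq.symm ▸ hf h⟩
  · exact Or.inr ⟨h, hq.symm ▸ hp.symm ▸ hf h⟩

lemma Continuous.isConnected_graph [TopologicalSpace α] [TopologicalSpace β] [ConnectedSpace α]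
    {f : α → β} (hf : Continuous f) : IsConnected {p : α × β | p.2 = f p.1} := by
  convert isConnected_range (continuous_id.prodMk hf) using 1
  ext p
  exact ⟨fun hp => ⟨p.1, Prod.ext rfl hp.symm⟩, by rintro ⟨a, rfl⟩; rfl⟩

lemma image_fst_graph (f : α → β) : Prod.fst '' {p : α × β | p.2 = f p.1} = univ :=
  eq_univ_of_forall fun a => ⟨(a, f a), rfl, rfl⟩

lemma Function.Surjective.image_snd_graph {f : α → β} (hf : f.Surjective) :
    Prod.snd '' {p : α × β | p.2 = f p.1} = univ :=
  eq_univ_of_forall fun b =>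
    let ⟨a, ha⟩ := hf b
    ⟨(a, b), ha.symm, rfl⟩

end Graph

section ChainsInProducts

variable {α β : Type*}

lemma Set.OrdConnected.prod [Preorder α] [Preorder β] {s : Set α} {t : Set β}
    (hs : s.OrdConnected) (ht : t.OrdConnected) : (s ×ˢ t).OrdConnected :=
  ⟨fun _ hp _ hq _ hz => ⟨hs.out hp.1 hq.1 ⟨hz.1.1, hz.2.1⟩, ht.out hp.2 hq.2 ⟨hz.1.2, hz.2.2⟩⟩⟩

lemma Set.OrdConnected.interior_of_linearOrder [LinearOrder α] [TopologicalSpace α]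
    [OrderClosedTopology α] {s : Set α} (hs : s.OrdConnected) : (interior s).OrdConnected := by
  refine ⟨fun x hx y hy z hz => ?_⟩
  rcases hz.1.eq_or_lt with rfl | hxz
  · exact hx
  rcases hz.2.eq_or_lt with rfl | hzy
  · exact hy
  exact interior_maximal (Ioo_subset_Icc_self.trans (hs.out (interior_subset hx)
    (interior_subset hy))) isOpen_Ioo ⟨hxz, hzy⟩

lemma exists_isOpen_ordConnected_subset_of_mem_nhds [LinearOrder α] [TopologicalSpace α]
    [OrderTopology α] {O : Set α} {a : α} (h : O ∈ 𝓝 a) :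
    ∃ b, IsOpen b ∧ b.OrdConnected ∧ a ∈ b ∧ b ⊆ O :=
  ⟨interior (ordConnectedComponent O a), isOpen_interior,
    (inferInstance : (ordConnectedComponent O a).OrdConnected).interior_of_linearOrder,
    mem_interior_iff_mem_nhds.2 (ordConnectedComponent_mem_nhds.2 h),
    interior_subset.trans ordConnectedComponent_subset⟩

lemma exists_isOpen_ordConnected_subset_of_mem_nhds_prod [LinearOrder α] [TopologicalSpace α]
    [OrderTopology α] [LinearOrder β] [TopologicalSpace β] [OrderTopology β] {O : Set (α × β)}
    {p : α × β} (h : O ∈ 𝓝 p) : ∃ b, IsOpen b ∧ b.OrdConnected ∧ p ∈ b ∧ b ⊆ O := by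
  obtain ⟨u, hu, v, hv, huv⟩ := mem_nhds_prod_iff.1 h
  obtain ⟨I, hIo, hIc, hpI, hIu⟩ := exists_isOpen_ordConnected_subset_of_mem_nhds hu
  obtain ⟨J, hJo, hJc, hpJ, hJv⟩ := exists_isOpen_ordConnected_subset_of_mem_nhds hv
  exact ⟨I ×ˢ J, hIo.prod hJo, hIc.prod hJc, ⟨hpI, hpJ⟩, (prod_mono hIu hJv).trans huv⟩

lemma IsChain.bot_mem [PartialOrder α] [OrderBot α] [PartialOrder β] [OrderBot β]
    {A : Set (α × β)} (hA : IsChain (· ≤ ·) A) (h₁ : Prod.fst '' A = univ)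
    (h₂ : Prod.snd '' A = univ) : ⊥ ∈ A := by
  obtain ⟨p, hp, hp₁⟩ : ⊥ ∈ Prod.fst '' A := h₁ ▸ mem_univ _
  obtain ⟨q, hq, hq₂⟩ : ⊥ ∈ Prod.snd '' A := h₂ ▸ mem_univ _
  rcases hA.total hp hq with h | h
  · rwa [show p = ⊥ from Prod.ext hp₁ (le_bot_iff.1 (hq₂ ▸ h.2))] at hp
  · rwa [show q = ⊥ from Prod.ext (le_bot_iff.1 (hp₁ ▸ h.1)) hq₂] at hq

lemma IsChain.top_mem [PartialOrder α] [OrderTop α] [PartialOrder β] [OrderTop β]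
    {A : Set (α × β)} (hA : IsChain (· ≤ ·) A) (h₁ : Prod.fst '' A = univ)
    (h₂ : Prod.snd '' A = univ) : ⊤ ∈ A := by
  obtain ⟨p, hp, hp₁⟩ : ⊤ ∈ Prod.fst '' A := h₁ ▸ mem_univ _
  obtain ⟨q, hq, hq₂⟩ : ⊤ ∈ Prod.snd '' A := h₂ ▸ mem_univ _
  rcases hA.total hp hq with h | h
  · rwa [show q = ⊤ from Prod.ext (top_le_iff.1 (hp₁ ▸ h.1)) hq₂] at hq
  · rwa [show p = ⊤ from Prod.ext hp₁ (top_le_iff.1 (hq₂ ▸ h.2))] at hp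

variable [CompleteLinearOrder α] [TopologicalSpace α] [OrderTopology α]
  [CompleteLinearOrder β] [TopologicalSpace β] [OrderTopology β]

lemma IsChain.sSup_mem_closure {S : Set (α × β)} (hS : IsChain (· ≤ ·) S) (hne : S.Nonempty) :
    sSup S ∈ closure S := by
  rw [mem_closure_iff_nhds]
  intro O hO
  obtain ⟨u, hu, v, hv, huv⟩ := mem_nhds_prod_iff.1 hO
  obtain ⟨I, hIo, hIc, hsI, hIu⟩ := exists_isOpen_ordConnected_subset_of_mem_nhds hu
  obtain ⟨J, hJo, hJc, hsJ, hJv⟩ := exists_isOpen_ordConnected_subset_of_mem_nhds hv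
  have h₁ : (sSup S).1 ∈ closure (Prod.fst '' S) := by
    rw [Prod.fst_sSup]; exact (isLUB_sSup _).mem_closure (hne.image _)
  have h₂ : (sSup S).2 ∈ closure (Prod.snd '' S) := by
    rw [Prod.snd_sSup]; exact (isLUB_sSup _).mem_closure (hne.image _)
  obtain ⟨_, hpI, p, hpS, rfl⟩ := mem_closure_iff.1 h₁ I hIo hsI
  obtain ⟨_, hqJ, q, hqS, rfl⟩ := mem_closure_iff.1 h₂ J hJo hsJ
  rcases hS.total hpS hqS with hpq | hqp
  · exact ⟨q, huv ⟨hIu (hIc.out hpI hsI ⟨hpq.1, (le_sSup hqS).1⟩), hJv hqJ⟩, hqS⟩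
  · exact ⟨p, huv ⟨hIu hpI, hJv (hJc.out hqJ hsJ ⟨hqp.2, (le_sSup hpS).2⟩)⟩, hpS⟩

end ChainsInProducts

lemma IsPreconnected.isGreatest_of_maximal {α : Type*} [PartialOrder α] [TopologicalSpace α]
    [ClosedIicTopology α] [ClosedIciTopology α] {A U : Set α} (hA : IsPreconnected A)
    (hc : IsChain (· ≤ ·) A) (hU : IsOpen U) {s : α} (hs : Maximal (· ∈ A ∩ U) s) :
    IsGreatest A s := by
  refine ⟨hs.1.1, fun w₀ hw₀ => by_contra fun hw₀s => ?_⟩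
  -- `A ∩ Iic s` is relatively open in `A`: near `s` by maximality, elsewhere as `A` is a chain
  have hcover : A ⊆ (U ∪ (Ici s)ᶜ) ∪ (Iic s)ᶜ := by
    intro w hw
    by_cases hws : w ≤ s
    · rcases eq_or_ne w s with rfl | hne
      · exact Or.inl (Or.inl hs.1.2)
      · exact Or.inl (Or.inr fun hsw => hne (le_antisymm hws hsw))
    · exact Or.inr hws
  obtain ⟨w, hwA, hw₁, hw₂⟩ := hA _ _ (hU.union isClosed_Ici.isOpen_compl)
    isClosed_Iic.isOpen_compl hcover ⟨s, hs.1.1, Or.inl hs.1.2⟩ ⟨w₀, hw₀, hw₀s⟩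
  have hsw : s ≤ w := (hc.total hwA hs.1.1).resolve_left hw₂
  rcases hw₁ with hwU | hwI
  · exact hw₂ (hs.2 ⟨hwA, hwU⟩ hsw)
  · exact hwI hsw

lemma Fin.le_apply_zero_or_apply_last_le_or_exists_mem_Icc {α : Type*} [Preorder α] :
    ∀ {n : ℕ} (a : Fin (n + 1) → α) {k : α}, (∀ j, a j ≤ k ∨ k ≤ a j) →
      k ≤ a 0 ∨ a (Fin.last n) ≤ k ∨ ∃ j : Fin n, k ∈ Icc (a j.castSucc) (a j.succ)
  | 0, a, _, hk => (hk 0).symm.imp_right Or.inl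
  | n + 1, a, k, hk => by
    rcases le_apply_zero_or_apply_last_le_or_exists_mem_Icc (fun j => a j.castSucc)
      (fun j => hk _) with h | h | ⟨j, hj⟩
    · exact Or.inl h
    · rcases hk (Fin.last (n + 1)) with h' | h'
      · exact Or.inr (Or.inl h')
      · exact Or.inr (Or.inr ⟨Fin.last n, h, h'⟩)
    · exact Or.inr (Or.inr ⟨j.castSucc, hj⟩)

lemma Fin.monotone_snoc {α : Type*} [Preorder α] {n : ℕ} {f : Fin (n + 1) → α} {a : α}
    (hf : Monotone f) (ha : f (Fin.last n) ≤ a) : Monotone (Fin.snoc f a : Fin (n + 2) → α) := by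
  refine Fin.monotone_iff_le_succ.2 fun j => ?_
  induction j using Fin.lastCases with
  | last => simpa using ha
  | cast j =>
    rw [Fin.succ_castSucc, Fin.snoc_castSucc, Fin.snoc_castSucc]
    exact hf (Fin.castSucc_le_succ j)

section BoxChain

variable {α : Type*} [Preorder α] [OrderBot α] {n : ℕ}

structure IsBoxChain (U : Fin (n + 1) → Set α) (c : Fin (n + 1) → α) : Prop where
  ordConnected : ∀ j, (U j).OrdConnected
  bot_mem : ⊥ ∈ U 0
  mem : ∀ j, c j ∈ U j
  mem_succ : ∀ j : Fin n, c j.castSucc ∈ U j.succ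

variable {U : Fin (n + 1) → Set α} {c : Fin (n + 1) → α}

lemma IsBoxChain.exists_mem [OrderTop α] (h : IsBoxChain U c) (htop : ⊤ ∈ U (Fin.last n))
    {z : α} (hz : ∀ j, c j ≤ z ∨ z ≤ c j) : ∃ j, z ∈ U j := by
  rcases Fin.le_apply_zero_or_apply_last_le_or_exists_mem_Icc c hz with h₀ | h₁ | ⟨j, hj⟩
  · exact ⟨0, (h.ordConnected 0).out h.bot_mem (h.mem 0) ⟨bot_le, h₀⟩⟩
  · exact ⟨Fin.last n, (h.ordConnected _).out (h.mem _) htop ⟨h₁, le_top⟩⟩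
  · exact ⟨j.succ, (h.ordConnected _).out (h.mem_succ j) (h.mem j.succ) hj⟩

lemma IsBoxChain.exists_nhds [TopologicalSpace α] (h : IsBoxChain U c) (hU : ∀ j, IsOpen (U j)) :
    ∃ N : Fin (n + 1) → Set α, (∀ j, N j ∈ 𝓝 (c j)) ∧ ∀ d, (∀ j, d j ∈ N j) → IsBoxChain U d := by
  refine ⟨Fin.lastCases (U (Fin.last n)) fun j => U j.castSucc ∩ U j.succ, fun j => ?_,
    fun d hd => ⟨h.ordConnected, h.bot_mem, fun j => ?_, fun j => ?_⟩⟩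
  · induction j using Fin.lastCases with
    | last => simpa using (hU _).mem_nhds (h.mem _)
    | cast j => simpa using inter_mem ((hU _).mem_nhds (h.mem _)) ((hU _).mem_nhds (h.mem_succ j))
  · induction j using Fin.lastCases with
    | last => simpa using hd (Fin.last n)
    | cast j => exact (show d j.castSucc ∈ U j.castSucc ∩ U j.succ by simpa using hd j.castSucc).1
  · exact (show d j.castSucc ∈ U j.castSucc ∩ U j.succ by simpa using hd j.castSucc).2

lemma IsBoxChain.snoc (h : IsBoxChain U c) {b : Set α} (hb : b.OrdConnected)
    (hlast : c (Fin.last n) ∈ b) {q : α} (hq : q ∈ b) :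
    IsBoxChain (Fin.snoc U b : Fin (n + 2) → Set α) (Fin.snoc c q) where
  ordConnected j := by
    induction j using Fin.lastCases with
    | last => simpa using hb
    | cast j => simpa using h.ordConnected j
  bot_mem := by
    rw [← Fin.castSucc_zero, Fin.snoc_castSucc]
    exact h.bot_mem
  mem j := by
    induction j using Fin.lastCases with
    | last => simpa using hq
    | cast j => simpa using h.mem j
  mem_succ j := by
    induction j using Fin.lastCases with
    | last => simpa using hlast
    | cast j =>
      rw [Fin.succ_castSucc, Fin.snoc_castSucc, Fin.snoc_castSucc]
      exact h.mem_succ j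

end BoxChain

structure Stair {α : Type*} [Preorder α] [OrderBot α] (A : Set α) (good : Set α → Prop) where
  n : ℕ
  pt : Fin (n + 1) → α
  box : Fin (n + 1) → Set α
  monotone_pt : Monotone pt
  pt_mem : ∀ j, pt j ∈ A
  good_box : ∀ j, good (box j)
  isBoxChain : IsBoxChain box pt

namespace Stair

variable {α : Type*} [Preorder α] [OrderBot α] {A : Set α} {good : Set α → Prop}

def last (s : Stair A good) : α := s.pt (Fin.last s.n)

def single (hA : ⊥ ∈ A) {b : Set α} (hb : good b) (hbc : b.OrdConnected) (hbot : ⊥ ∈ b) :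
    Stair A good where
  n := 0
  pt _ := ⊥
  box _ := b
  monotone_pt := monotone_const
  pt_mem _ := hA
  good_box _ := hb
  isBoxChain := ⟨fun _ => hbc, hbot, fun _ => hbot, fun j => j.elim0⟩

def snoc (s : Stair A good) {q : α} (hq : q ∈ A) (hle : s.last ≤ q) {b : Set α} (hb : good b)
    (hbc : b.OrdConnected) (hlast : s.last ∈ b) (hqb : q ∈ b) : Stair A good where
  n := s.n + 1
  pt := Fin.snoc s.pt q
  box := Fin.snoc s.box b
  monotone_pt := Fin.monotone_snoc s.monotone_pt hle
  pt_mem j := by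
    induction j using Fin.lastCases with
    | last => simpa using hq
    | cast j => simpa using s.pt_mem j
  good_box j := by
    induction j using Fin.lastCases with
    | last => simpa using hb
    | cast j => simpa using s.good_box j
  isBoxChain := s.isBoxChain.snoc hbc hlast hqb

@[simp]
lemma last_snoc (s : Stair A good) {q : α} (hq : q ∈ A) (hle : s.last ≤ q) {b : Set α}
    (hb : good b) (hbc : b.OrdConnected) (hlast : s.last ∈ b) (hqb : q ∈ b) :
    (s.snoc hq hle hb hbc hlast hqb).last = q :=
  Fin.snoc_last (α := fun _ => α) ..

end Stair

lemma exists_stair_last_eq_top {K : Type*} [CompleteLinearOrder K] [TopologicalSpace K]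
    [OrderTopology K] {A : Set (K × K)} {good : Set (K × K) → Prop} (hAc : IsClosed A)
    (hc : IsChain (· ≤ ·) A) (hA : IsPreconnected A) (hbot : ⊥ ∈ A) (htop : ⊤ ∈ A)
    (hgood : ∀ p ∈ A, ∃ b, IsOpen b ∧ b.OrdConnected ∧ p ∈ b ∧ good b) :
    ∃ s : Stair A good, s.last = ⊤ := by
  set T := {p | p ∈ A ∧ ∃ s : Stair A good, s.last = p}
  have hTA : T ⊆ A := fun _ hp => hp.1
  have extend : ∀ p ∈ T, ∀ q ∈ A, p ≤ q → ∀ b, good b → b.OrdConnected → p ∈ b → q ∈ b →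
      q ∈ T := by
    rintro _ ⟨-, s, rfl⟩ q hq hle b hb hbc hpb hqb
    exact ⟨hq, s.snoc hq hle hb hbc hpb hqb, s.last_snoc ..⟩
  have hbotT : ⊥ ∈ T := by
    obtain ⟨b, -, hbc, hbotb, hb⟩ := hgood ⊥ hbot
    exact ⟨hbot, Stair.single hbot hb hbc hbotb, rfl⟩
  have hsup : sSup T ∈ closure T := (hc.mono hTA).sSup_mem_closure ⟨⊥, hbotT⟩
  have hsupA : sSup T ∈ A := hAc.closure_subset_iff.2 hTA hsup
  obtain ⟨b, hbo, hbc, hsupb, hb⟩ := hgood _ hsupA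
  have hsupT : sSup T ∈ T := by
    obtain ⟨p, hpb, hpT⟩ := mem_closure_iff.1 hsup b hbo hsupb
    exact extend p hpT _ hsupA (le_sSup hpT) b hb hbc hpb hsupb
  -- every point of `A` near `sSup T` and above it is reachable, hence below `sSup T`
  have hgreatest : IsGreatest A (sSup T) := hA.isGreatest_of_maximal hc hbo
    ⟨⟨hsupA, hsupb⟩, fun w hw hle => le_sSup (extend _ hsupT w hw.1 hle b hb hbc hsupb hw.2)⟩
  obtain ⟨-, s, hs⟩ := hsupT
  exact ⟨s, hs.trans (top_le_iff.1 (hgreatest.2 htop))⟩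

section Grid

variable {X K : Type*} [LinearOrder X]

lemma exists_strictMono_mem_Ioo [LinearOrder K] (e : X ↪o K)
    (hbetween : ∀ u v : K, u < v → ∃ x, u < e x ∧ e x < v) :
    ∀ {n : ℕ} (a : K) (l r : Fin n → K), (∀ j, max a (l j) < r j) → Monotone r →
      ∃ x : Fin n → X, StrictMono x ∧ ∀ j, e (x j) ∈ Ioo (max a (l j)) (r j)
  | 0, _, _, _, _, _ => ⟨Fin.elim0, fun j => j.elim0, fun j => j.elim0⟩
  | n + 1, a, l, r, hlr, hr => by
    obtain ⟨x₀, hx₀⟩ := hbetween _ _ (hlr 0)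
    obtain ⟨x, hx, hxmem⟩ := exists_strictMono_mem_Ioo e hbetween (e x₀) (fun j => l j.succ)
      (fun j => r j.succ)
      (fun j => max_lt (hx₀.2.trans_le (hr (Fin.zero_le _))) (le_max_right a _ |>.trans_lt (hlr _)))
      (hr.comp (Fin.strictMono_succ.monotone))
    refine ⟨Fin.cons x₀ x, Fin.strictMono_cons.2 ⟨fun j => ?_, hx⟩, Fin.cases hx₀ fun j => ?_⟩
    · exact e.lt_iff_lt.1 ((le_max_left _ _).trans_lt (hxmem j).1)
    · refine ⟨lt_of_le_of_lt ?_ (hxmem j).1, (hxmem j).2⟩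
      exact max_le_max (le_max_left _ _ |>.trans hx₀.1.le) le_rfl

variable [CompleteLinearOrder K] [TopologicalSpace K] [OrderTopology K] [Nontrivial K]
  (e : X ↪o K)

lemma exists_strictMono_mem_nhds (hbetween : ∀ u v : K, u < v → ∃ x, u < e x ∧ e x < v)
    {n : ℕ} {t : Fin n → K} (ht : Monotone t) {I : Fin n → Set K} (hI : ∀ j, I j ∈ 𝓝 (t j)) :
    ∃ x : Fin n → X, StrictMono x ∧ ∀ j, e (x j) ∈ I j := by
  have hint : ∀ j, ∃ l u, l < u ∧ Ioo l u ⊆ I j ∧ (u = t j ∨ l = ⊥ ∧ t j = ⊥) := by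
    intro j
    rcases eq_bot_or_bot_lt (t j) with htj | htj
    · obtain ⟨u, hu, hsub⟩ := exists_Ico_subset_of_mem_nhds (hI j) ⟨⊤, htj ▸ bot_lt_top⟩
      exact ⟨⊥, u, htj ▸ hu, Ioo_subset_Ico_self.trans (htj ▸ hsub), Or.inr ⟨rfl, htj⟩⟩
    · obtain ⟨l, hl, hsub⟩ := exists_Ioc_subset_of_mem_nhds (hI j) ⟨⊥, htj⟩
      exact ⟨l, t j, hl, Ioo_subset_Ioc_self.trans hsub, Or.inl rfl⟩
  choose l u hlu hsub hcase using hint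
  -- points equal to `⊥` are approached from the right, below every positive `t j`
  set w := Finset.univ.inf u
  have hw : ⊥ < w := (Finset.lt_inf_iff bot_lt_top).2 fun j _ => bot_le.trans_lt (hlu j)
  have hwu : ∀ j, w ⊔ t j ≤ u j := fun j => sup_le (Finset.inf_le (Finset.mem_univ j))
    (by rcases hcase j with h | ⟨-, h⟩ <;> simp [h])
  have hlw : ∀ j, max ⊥ (l j) < w ⊔ t j := fun j => by
    rcases hcase j with h | ⟨h, -⟩
    · simpa [h] using Or.inr (hlu j)
    · simpa [h] using Or.inl hw
  obtain ⟨x, hx, hxmem⟩ := exists_strictMono_mem_Ioo e hbetween ⊥ l (fun j => w ⊔ t j) hlw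
    (monotone_const.sup ht)
  refine ⟨x, hx, fun j => hsub j ⟨?_, (hxmem j).2.trans_le (hwu j)⟩⟩
  simpa using (hxmem j).1

lemma exists_strictMono_prod_mem_nhds (hbetween : ∀ u v : K, u < v → ∃ x, u < e x ∧ e x < v)
    {n : ℕ} {c : Fin n → K × K} (hc : Monotone c) {N : Fin n → Set (K × K)}
    (hN : ∀ j, N j ∈ 𝓝 (c j)) :
    ∃ x y : Fin n → X, StrictMono x ∧ StrictMono y ∧ ∀ j, (e (x j), e (y j)) ∈ N j := by
  choose I hI J hJ hIJ using fun j => mem_nhds_prod_iff.1 (hN j)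
  obtain ⟨x, hx, hxI⟩ := exists_strictMono_mem_nhds e hbetween (fun _ _ h => (hc h).1) hI
  obtain ⟨y, hy, hyJ⟩ := exists_strictMono_mem_nhds e hbetween (fun _ _ h => (hc h).2) hJ
  exact ⟨x, y, hx, hy, fun j => hIJ j ⟨hxI j, hyJ j⟩⟩

end Grid

section Approximation

variable {X K : Type*} [LinearOrder X] [DenselyOrdered X] [CompleteLinearOrder K]
  [TopologicalSpace K] [OrderTopology K] [Nontrivial K] {e : X ↪o K}

lemma Stair.exists_graph_subset_boxes (hX : UltrahomogeneousOrder X) (he : SupInfDense e)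
    {A : Set (K × K)} {good : Set (K × K) → Prop} (s : Stair A good)
    (hopen : ∀ j, IsOpen (s.box j)) (hs : s.last = ⊤) :
    ∃ g : X ≃o X, (∀ k, ∃ j, (k, supExtension e g k) ∈ s.box j) ∧
      ∀ j, ∃ k, (k, supExtension e g k) ∈ s.box j := by
  obtain ⟨N, hN, hNchain⟩ := s.isBoxChain.exists_nhds hopen
  obtain ⟨x, y, hx, hy, hxy⟩ :=
    exists_strictMono_prod_mem_nhds e (fun _ _ => he.exists_lt_lt) s.monotone_pt hN
  obtain ⟨g, hg⟩ := hX _ x y hx hy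
  have hgraph : ∀ j, supExtension e g (e (x j)) = e (y j) := fun j => by
    rw [supExtension_apply_embedding e g.monotone, hg]
  have hchain := hNchain _ hxy
  refine ⟨g, fun k => hchain.exists_mem (hs ▸ s.isBoxChain.mem _) fun j => ?_,
    fun j => ⟨e (x j), by simpa [hgraph] using hchain.mem j⟩⟩
  rcases le_total (e (x j)) k with h | h
  · exact Or.inl ⟨h, hgraph j ▸ monotone_supExtension e g h⟩
  · exact Or.inr ⟨h, hgraph j ▸ monotone_supExtension e g h⟩

lemma exists_graph_subset_inter_nonempty (hX : UltrahomogeneousOrder X) (he : SupInfDense e)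
    {A : Set (K × K)} (hAc : IsClosed A) (hc : IsChain (· ≤ ·) A) (hA : IsPreconnected A)
    (hbot : ⊥ ∈ A) (htop : ⊤ ∈ A) {W : Set (K × K)} (hW : IsOpen W) (hAW : A ⊆ W)
    {𝒱 : Set (Set (K × K))} (h𝒱 : 𝒱.Finite) (hV : ∀ V ∈ 𝒱, IsOpen V ∧ (A ∩ V).Nonempty) :
    ∃ g : X ≃o X, {p : K × K | p.2 = supExtension e g p.1} ⊆ W ∧
      ∀ V ∈ 𝒱, ({p : K × K | p.2 = supExtension e g p.1} ∩ V).Nonempty := by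
  have : Finite 𝒱 := h𝒱.to_subtype
  choose a ha using fun V : 𝒱 => (hV V V.2).2
  let good (b : Set (K × K)) : Prop := IsOpen b ∧ b ⊆ W ∧ ∀ V : 𝒱, a V ∈ b → b ⊆ V
  have hgood : ∀ p ∈ A, ∃ b, IsOpen b ∧ b.OrdConnected ∧ p ∈ b ∧ good b := by
    intro p hp
    have hO : W ∩ ⋂ V : 𝒱, (if a V = p then (V : Set (K × K)) else {a V}ᶜ) ∈ 𝓝 p := by
      refine inter_mem (hW.mem_nhds (hAW hp)) (iInter_mem.2 fun V => ?_)
      split_ifs with h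
      · exact (hV V V.2).1.mem_nhds (h ▸ (ha V).2)
      · exact isOpen_compl_singleton.mem_nhds (Ne.symm h)
    obtain ⟨b, hbo, hbc, hpb, hbO⟩ := exists_isOpen_ordConnected_subset_of_mem_nhds_prod hO
    refine ⟨b, hbo, hbc, hpb, hbo, hbO.trans inter_subset_left, fun V haV => ?_⟩
    have hbV := hbO.trans (inter_subset_right.trans (iInter_subset _ V))
    split_ifs at hbV
    · exact hbV
    · exact absurd rfl (hbV haV)
  obtain ⟨s, hs⟩ := exists_stair_last_eq_top hAc hc hA hbot htop hgood
  obtain ⟨g, hgW, hgV⟩ := Stair.exists_graph_subset_boxes hX he s (fun j => (s.good_box j).1) hs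
  refine ⟨g, fun p hp => ?_, fun V hV => ?_⟩
  · obtain ⟨j, hj⟩ := hgW p.1
    exact (s.good_box j).2.1 (by rwa [← hp] at hj)
  · obtain ⟨j, hj⟩ := s.isBoxChain.exists_mem (hs ▸ s.isBoxChain.mem _)
      fun j => hc.total (s.pt_mem j) (ha ⟨V, hV⟩).1
    obtain ⟨k, hk⟩ := hgV j
    exact ⟨_, rfl, (s.good_box j).2.2 ⟨V, hV⟩ hj hk⟩

end Approximation

/-- Description of the graph compactification of `Aut(X)` for an infinite ultrahomogeneous
LOTS `X`: for `K` the least linearly ordered compactification of `X` (a complete linear order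
with the order topology in which `X` is sup- and inf-dense), every `ĝ(k) = sup{g(x) : x ≤ k}`
is an order-automorphism and homeomorphism of `K` extending `g`, and the closure of the graphs
`{Γ(ĝ) : g ∈ Aut(X)}` in the Vietoris hyperspace of `K × K` consists exactly of the closed
subsets of `K × K` that are linearly ordered by the coordinatewise order, connected, and have
full projections. -/
theorem stmt_18 {X K : Type*} [LinearOrder X] [Infinite X]
    (hX : UltrahomogeneousOrder X)
    [CompleteLinearOrder K] [TopologicalSpace K] [OrderTopology K]
    (e : X ↪o K)
    (hdense : ∀ k : K, k = sSup ((fun x : X => e x) '' {x : X | e x ≤ k}) ∧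
                       k = sInf ((fun x : X => e x) '' {x : X | k ≤ e x}))
    (hatf : (X ≃o X) → K → K)
    (hhat : ∀ (g : X ≃o X) (k : K),
      hatf g k = sSup ((fun x : X => e (g x)) '' {x : X | e x ≤ k})) :
    (∀ g : X ≃o X,
      (∃ Gk : K ≃o K, ∀ k : K, Gk k = hatf g k) ∧
      (∃ Φ : K ≃ₜ K, ∀ k : K, Φ k = hatf g k) ∧
      (∀ x : X, hatf g (e x) = e (g x))) ∧
    @closure _ (vietorisTop (K × K))
        {A : HClosed (K × K) | ∃ g : X ≃o X,
          (A : Set (K × K)) = {p : K × K | p.2 = hatf g p.1}} =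
      {A : HClosed (K × K) |
        (∀ p ∈ (A : Set (K × K)), ∀ q ∈ (A : Set (K × K)),
          (p.1 ≤ q.1 ∧ p.2 ≤ q.2) ∨ (q.1 ≤ p.1 ∧ q.2 ≤ p.2)) ∧
        IsConnected (A : Set (K × K)) ∧
        Prod.fst '' (A : Set (K × K)) = Set.univ ∧
        Prod.snd '' (A : Set (K × K)) = Set.univ} := by
  obtain rfl : hatf = fun g : X ≃o X => supExtension e g := funext fun g => funext (hhat g)
  have he : SupInfDense e := hdense
  have := hX.denselyOrdered
  have := he.denselyOrdered
  have : Nontrivial K := e.injective.nontrivial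
  have : ConnectedSpace K := { toNonempty := ⟨⊥⟩ }
  refine ⟨fun g => ⟨⟨he.supExtensionIso g, fun _ => rfl⟩,
    ⟨(he.supExtensionIso g).toHomeomorph, fun _ => rfl⟩,
    supExtension_apply_embedding e g.monotone⟩, ?_⟩
  let _ : TopologicalSpace (HClosed (K × K)) := vietorisTop (K × K)
  refine (closure_minimal ?_ ?_).antisymm fun A hA => mem_closure_iff.2 fun U hU hAU => ?_
  · rintro A ⟨g, hA⟩
    simp only [mem_ofPred_eq, hA, ← he.coe_supExtensionIso g]
    exact ⟨fun p hp q hq => (he.supExtensionIso g).monotone.isChain_graph.total hp hq,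
      (he.supExtensionIso g).continuous.isConnected_graph, image_fst_graph _,
      (he.supExtensionIso g).surjective.image_snd_graph⟩
  · exact (Vietoris.isClosed_setOf_forall_mem_forall_mem (R := fun p q : K × K => p ≤ q ∨ q ≤ p)
      ((isClosed_le continuous_fst continuous_snd).union
        (isClosed_le continuous_snd continuous_fst))).inter
      (Vietoris.isClosed_setOf_isConnected.inter
        ((Vietoris.isClosed_setOf_image_eq_univ continuous_fst).inter
          (Vietoris.isClosed_setOf_image_eq_univ continuous_snd)))
  · obtain ⟨hch, hconn, hfst, hsnd⟩ := hA
    have hc : IsChain (· ≤ ·) (A : Set (K × K)) := fun p hp q hq _ => hch p hp q hq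
    obtain ⟨W, 𝒱, hW, hAW, h𝒱, hV, hU⟩ := Vietoris.exists_basic_nhds hU hAU
    obtain ⟨g, hgW, hgV⟩ := exists_graph_subset_inter_nonempty hX he A.2 hc hconn.isPreconnected
      (hc.bot_mem hfst hsnd) (hc.top_mem hfst hsnd) hW hAW h𝒱 hV
    exact ⟨⟨_, isClosed_eq continuous_snd ((he.supExtensionIso g).continuous.comp continuous_fst)⟩,
      hU _ hgW hgV, g, rfl⟩
end
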